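/- arXiv:2510.11322 — 8 statements merged into one kernel-verified Lean document; each statement's English description precedes it below -/
import Mathlib

section
/- For all nonnegative integers m and positive integers k, the alternating sum over j from 0 to m of (-1)^j times the elementary symmetric function e_{m-j} times the Schur function s_{(j+2,2^{k-1})} equals the Schur function s_{(2^k,1^m)}. -/
/-!
Write `s_(c^(k+1), 1^m)` by Jacobi–Trudi and let `U m a` be the determinant of size `k + m + 1`
whose last column has its index raised by `a`. Expanding along the last row, which is
`(0, …, 0, 1, h_(a+1))`, gives `U (m+1) a = h_(a+1) U m 0 - U m (a+1)`, while `U 0 a` is, after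
transposing and reversing, the Jacobi–Trudi determinant of `(c + a, c^k)`. Unrolling the
recursion gives `∑_r (-1)^r h_r U (m-r) 0 = (-1)^m U 0 m`, i.e. `H(-t) S(t) = T(-t)` for the
generating series `S(t) = ∑ U m 0 t^m` and `T(t) = ∑ U 0 j t^j`, and `E(t) H(-t) = 1` turns this
into `S(t) = E(t) T(-t)`.
-/

open Finset

/-- `h_m` for an integer index `m`, zero for negative `m`. -/
noncomputable def hZ (N : ℕ) (m : ℤ) : MvPolynomial (Fin N) ℤ :=
  if 0 ≤ m then MvPolynomial.hsymm (Fin N) ℤ m.toNat else 0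

/-- The Schur polynomial of a partition `lam` (given as a list of its parts, in
weakly decreasing order), defined by the Jacobi–Trudi determinant
`s_λ = det (h_{λ_i - i + j})`. -/
noncomputable def schur (N : ℕ) (lam : List ℕ) : MvPolynomial (Fin N) ℤ :=
  Matrix.det (Matrix.of fun i j : Fin lam.length =>
    hZ N ((lam.get i : ℤ) - (i : ℤ) + (j : ℤ)))

theorem PowerSeries.one_add_C_mul_X_mul_mk_neg_one_pow_mul_pow {R : Type*} [CommRing R] (a : R) :
    (1 + C a * X) * mk (fun n => (-1) ^ n * a ^ n) = 1 := by
  have := congrArg (rescale (-a)) (mk_one_mul_one_sub_eq_one R)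
  simpa [rescale_mk, rescale_X, mul_comm, ← mul_pow] using this

namespace MvPolynomial

variable {σ R : Type*} [Fintype σ]

theorem coeff_prod_one_add_C_mul_X_eq_esymm [CommSemiring R] (n : ℕ) :
    PowerSeries.coeff n
        (∏ i : σ, (1 + PowerSeries.C (X i : MvPolynomial σ R) * PowerSeries.X)) =
      esymm σ R n := by
  simp_rw [prod_one_add, prod_mul_distrib, prod_const, ← map_prod, map_sum,
    PowerSeries.coeff_C_mul_X_pow, esymm, powersetCard_eq_filter, sum_filter, eq_comm]

variable [DecidableEq σ]

theorem coeff_prod_mk_pow_eq_hsymm [CommSemiring R] (n : ℕ) :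
    PowerSeries.coeff n (∏ i : σ, PowerSeries.mk fun t => (X i : MvPolynomial σ R) ^ t) =
      hsymm σ R n := by
  rw [PowerSeries.coeff_prod, hsymm]
  symm
  refine sum_bij' (fun s _ => Multiset.toFinsupp s.1)
    (fun l hl => ⟨Finsupp.toMultiset l, ?_⟩) (fun s _ => ?_) (fun _ _ => mem_univ _)
    (fun s _ => Subtype.ext (by simp)) (fun l _ => by simp) (fun s _ => ?_)
  · simpa [Finsupp.sum_fintype] using (mem_finsuppAntidiag.mp hl).1
  · exact mem_finsuppAntidiag.mpr
      ⟨(Multiset.sum_count_eq_card fun a _ => mem_univ a).trans s.2, subset_univ _⟩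
  · simp only [prod_multiset_map_count, PowerSeries.coeff_mk, Multiset.toFinsupp_apply]
    exact prod_subset (subset_univ _) fun i _ hi => by simp_all

theorem mk_esymm_mul_mk_neg_one_pow_mul_hsymm [CommRing R] :
    PowerSeries.mk (esymm σ R) * PowerSeries.mk (fun n => (-1) ^ n * hsymm σ R n) = 1 := by
  have hE :
      PowerSeries.mk (esymm σ R) = ∏ i : σ, (1 + PowerSeries.C (X i) * PowerSeries.X) := by
    ext n
    rw [PowerSeries.coeff_mk, coeff_prod_one_add_C_mul_X_eq_esymm]
  have hH : PowerSeries.mk (hsymm σ R) = ∏ i : σ, PowerSeries.mk fun t => X i ^ t := by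
    ext n
    rw [PowerSeries.coeff_mk, coeff_prod_mk_pow_eq_hsymm]
  rw [hE, ← PowerSeries.rescale_mk, hH, map_prod, ← prod_mul_distrib]
  simp_rw [PowerSeries.rescale_mk]
  exact prod_eq_one fun i _ => PowerSeries.one_add_C_mul_X_mul_mk_neg_one_pow_mul_pow _

end MvPolynomial

section Recurrence

open PowerSeries

variable {R : Type*} [CommRing R] (h : ℕ → R) {U : ℕ → ℕ → R}

theorem eq_sum_range_of_recurrence (hU : ∀ m a, U (m + 1) a = h (a + 1) * U m 0 - U m (a + 1))
    (m a : ℕ) :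
    U m a = ∑ r ∈ range m, (-1) ^ r * h (a + (r + 1)) * U (m - (r + 1)) 0 +
      (-1) ^ m * U 0 (a + m) := by
  induction m generalizing a with
  | zero => simp
  | succ m ih =>
    have hsum :
        ∑ r ∈ range m, (-1) ^ (r + 1) * h (a + (r + 1 + 1)) * U (m + 1 - (r + 1 + 1)) 0 =
        -∑ r ∈ range m, (-1) ^ r * h (a + 1 + (r + 1)) * U (m - (r + 1)) 0 := by
      rw [← sum_neg_distrib]
      refine sum_congr rfl fun r _ => ?_
      rw [Nat.add_sub_add_right, pow_succ, show a + (r + 1 + 1) = a + 1 + (r + 1) by omega]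
      ring
    rw [hU, ih (a + 1), sum_range_succ', hsum, Nat.add_sub_cancel,
      show a + (m + 1) = a + 1 + m by omega]
    ring

theorem mk_neg_one_pow_mul_mul_mk_of_recurrence (h0 : h 0 = 1)
    (hU : ∀ m a, U (m + 1) a = h (a + 1) * U m 0 - U m (a + 1)) :
    mk (fun n => (-1) ^ n * h n) * mk (fun m => U m 0) = mk (fun j => (-1) ^ j * U 0 j) := by
  ext m
  rw [coeff_mul, coeff_mk, Nat.sum_antidiagonal_eq_sum_range_succ
    (fun i j => coeff i (mk fun n => (-1) ^ n * h n) * coeff j (mk fun m => U m 0)),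
    sum_range_succ']
  simp only [coeff_mk, pow_zero, h0, one_mul, Nat.sub_zero]
  rw [eq_sum_range_of_recurrence h hU m 0, ← add_assoc, ← sum_add_distrib, sum_eq_zero,
    zero_add]
  · simp only [zero_add]
  · intro r _
    rw [pow_succ, zero_add]
    ring

theorem eq_sum_neg_one_pow_mul_of_recurrence {e : ℕ → R}
    (heh : mk e * mk (fun n => (-1) ^ n * h n) = 1) (h0 : h 0 = 1)
    (hU : ∀ m a, U (m + 1) a = h (a + 1) * U m 0 - U m (a + 1)) (m : ℕ) :
    U m 0 = ∑ j ∈ range (m + 1), (-1) ^ j * e (m - j) * U 0 j := by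
  have hS : mk (fun m => U m 0) = mk (fun j => (-1) ^ j * U 0 j) * mk e := by
    rw [← mk_neg_one_pow_mul_mul_mk_of_recurrence h h0 hU, mul_comm, ← mul_assoc, heh, one_mul]
  have hm := congrArg (coeff m) hS
  rw [coeff_mk, coeff_mul, Nat.sum_antidiagonal_eq_sum_range_succ
    (fun i j => coeff i (mk fun j => (-1) ^ j * U 0 j) * coeff j (mk e))] at hm
  simp only [hm, coeff_mk]
  exact sum_congr rfl fun j _ => by ring

end Recurrence

theorem Matrix.det_succ_succ_of_last_row_eq_zero {R : Type*} [CommRing R] {n : ℕ}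
    (M : Matrix (Fin (n + 2)) (Fin (n + 2)) R)
    (hM : ∀ j : Fin n, M (Fin.last (n + 1)) j.castSucc.castSucc = 0) :
    M.det = M (Fin.last _) (Fin.last _) * (M.submatrix Fin.castSucc Fin.castSucc).det -
      M (Fin.last _) (Fin.last n).castSucc *
        (M.submatrix Fin.castSucc (Fin.last n).castSucc.succAbove).det := by
  rw [det_succ_row M (Fin.last _), Fin.sum_univ_castSucc, Fin.sum_univ_castSucc,
    sum_eq_zero fun j _ => by rw [hM, mul_zero, zero_mul], zero_add, Fin.succAbove_last]
  have hpen : (-1 : R) ^ ((n + 1 : ℕ) + n) = -1 := Odd.neg_one_pow ⟨n, by ring⟩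
  have hlast : (-1 : R) ^ ((n + 1 : ℕ) + (n + 1 : ℕ)) = 1 := Even.neg_one_pow ⟨n + 1, rfl⟩
  simp only [Fin.val_last, Fin.val_castSucc, hpen, hlast]
  ring

section JacobiTrudi

variable {R : Type*}

def jacobiTrudi (h : ℤ → R) {n : ℕ} (μ : Fin n → ℤ) : Matrix (Fin n) (Fin n) R :=
  Matrix.of fun i j => h (μ i - i + j)

def jacobiTrudiShift (h : ℤ → R) (lam : ℕ → ℤ) (n a : ℕ) :
    Matrix (Fin (n + 1)) (Fin (n + 1)) R :=
  Matrix.of fun i j => h (lam i - i + j + if j = Fin.last n then (a : ℤ) else 0)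

theorem jacobiTrudiShift_zero (h : ℤ → R) (lam : ℕ → ℤ) (n : ℕ) :
    jacobiTrudiShift h lam n 0 = jacobiTrudi h fun i => lam i := by
  ext i j
  simp [jacobiTrudiShift, jacobiTrudi]

variable [CommRing R] {h : ℤ → R}

theorem det_jacobiTrudiShift_of_eq_const {lam : ℕ → ℤ} {n : ℕ} {c : ℤ}
    (hlam : ∀ i ≤ n, lam i = c) (a : ℕ) :
    (jacobiTrudiShift h lam n a).det =
      (jacobiTrudi h fun i : Fin (n + 1) => if i = 0 then c + a else c).det := by
  have : jacobiTrudi h (fun i : Fin (n + 1) => if i = 0 then c + a else c) =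
      (jacobiTrudiShift h lam n a).transpose.submatrix Fin.revPerm Fin.revPerm := by
    ext i j
    simp only [jacobiTrudi, jacobiTrudiShift, Matrix.of_apply, Matrix.submatrix_apply,
      Matrix.transpose_apply, Fin.revPerm_apply, Fin.rev_eq_iff, Fin.rev_last, Fin.val_rev]
    rw [hlam _ (by omega)]
    congr 1
    split_ifs <;> push_cast [Fin.ext_iff] at * <;> omega
  rw [this, Matrix.det_submatrix_equiv_self, Matrix.det_transpose]

theorem det_jacobiTrudiShift_succ (hneg : ∀ m < 0, h m = 0) (h0 : h 0 = 1) {lam : ℕ → ℤ}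
    {n : ℕ} (hlam : lam (n + 1) = 1) (a : ℕ) :
    (jacobiTrudiShift h lam (n + 1) a).det =
      h (a + 1) * (jacobiTrudiShift h lam n 0).det - (jacobiTrudiShift h lam n (a + 1)).det := by
  have hlast : jacobiTrudiShift h lam (n + 1) a (Fin.last _) (Fin.last _) = h (a + 1) := by
    simp only [jacobiTrudiShift, Matrix.of_apply, Fin.val_last, hlam, if_true]
    congr 1
    push_cast
    ring
  have hpen : jacobiTrudiShift h lam (n + 1) a (Fin.last _) (Fin.last n).castSucc = 1 := by
    simp [jacobiTrudiShift, hlam, h0, Fin.castSucc_ne_last]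
  have hminor_last : (jacobiTrudiShift h lam (n + 1) a).submatrix Fin.castSucc Fin.castSucc =
      jacobiTrudiShift h lam n 0 := by
    ext i j
    simp [jacobiTrudiShift, Fin.castSucc_ne_last]
  have hminor_pen : (jacobiTrudiShift h lam (n + 1) a).submatrix Fin.castSucc
      (Fin.last n).castSucc.succAbove = jacobiTrudiShift h lam n (a + 1) := by
    ext i j
    induction j using Fin.lastCases with
    | last =>
      simp only [jacobiTrudiShift, Matrix.of_apply, Matrix.submatrix_apply,
        Fin.succAbove_castSucc_self, Fin.succ_last, if_true, Fin.val_last, Fin.val_castSucc]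
      congr 1
      push_cast
      ring
    | cast j =>
      rw [Matrix.submatrix_apply, Fin.succAbove_of_castSucc_lt _ _
        (Fin.castSucc_lt_castSucc_iff.mpr j.castSucc_lt_last)]
      simp [jacobiTrudiShift, Fin.castSucc_ne_last]
  rw [Matrix.det_succ_succ_of_last_row_eq_zero, hlast, hpen, hminor_last, hminor_pen, one_mul]
  intro j
  simp only [jacobiTrudiShift, Matrix.of_apply, Fin.castSucc_ne_last, if_false, Fin.val_last,
    hlam, Fin.val_castSucc]
  apply hneg
  omega

end JacobiTrudi

theorem hZ_natCast (N n : ℕ) : hZ N n = MvPolynomial.hsymm (Fin N) ℤ n := by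
  simp [hZ]

theorem hZ_of_neg (N : ℕ) (m : ℤ) (hm : m < 0) : hZ N m = 0 :=
  if_neg hm.not_ge

theorem schur_eq_det_jacobiTrudi (N : ℕ) {lam : List ℕ} {n : ℕ} (hlen : lam.length = n)
    (μ : Fin n → ℤ) (hμ : ∀ i : Fin n, lam[i] = μ i) :
    schur N lam = (jacobiTrudi (hZ N) μ).det := by
  subst hlen
  simp only [schur, jacobiTrudi, List.get_eq_getElem, ← hμ, Fin.getElem_fin]

theorem schur_replicate_append_replicate_one (N k c m : ℕ) :
    schur N (List.replicate (k + 1) c ++ List.replicate m 1) =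
      ∑ j ∈ range (m + 1), (-1) ^ j * MvPolynomial.esymm (Fin N) ℤ (m - j) *
        schur N ((j + c) :: List.replicate k c) := by
  set lam : ℕ → ℤ := fun i => if i ≤ k then c else 1
  set U : ℕ → ℕ → MvPolynomial (Fin N) ℤ :=
    fun m a => (jacobiTrudiShift (hZ N) lam (k + m) a).det
  have h0 : hZ N 0 = 1 := by simp [hZ]
  have heh : PowerSeries.mk (MvPolynomial.esymm (Fin N) ℤ) *
      PowerSeries.mk (fun n : ℕ => (-1) ^ n * hZ N n) = 1 := by
    simpa [hZ_natCast] using MvPolynomial.mk_esymm_mul_mk_neg_one_pow_mul_hsymm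
  have hU : ∀ m a, U (m + 1) a = hZ N ↑(a + 1) * U m 0 - U m (a + 1) := fun m a => by
    rw [Nat.cast_succ]
    exact det_jacobiTrudiShift_succ (hZ_of_neg N) h0 (show lam (k + m + 1) = 1 by simp [lam]) a
  have hT : ∀ j, U 0 j = schur N ((j + c) :: List.replicate k c) := fun j => by
    rw [schur_eq_det_jacobiTrudi N (by simp) fun i : Fin (k + 1) => if i = 0 then c + j else c]
    · exact det_jacobiTrudiShift_of_eq_const (fun i hi => if_pos (by omega)) j
    · intro i
      cases i using Fin.cases <;> simp [add_comm]
  have hS : schur N (List.replicate (k + 1) c ++ List.replicate m 1) = U m 0 := by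
    rw [schur_eq_det_jacobiTrudi N (by simp; omega) fun i : Fin (k + m + 1) => lam i]
    · exact congrArg Matrix.det (jacobiTrudiShift_zero _ _ _).symm
    · intro i
      simp [List.getElem_append, lam]
  rw [hS, eq_sum_neg_one_pow_mul_of_recurrence (fun n : ℕ => hZ N n) heh (by simpa using h0) hU]
  simp_rw [hT]

/-- For all `m ≥ 0` and `k ≥ 1`,
`∑_{j=0}^{m} (-1)^j e_{m-j} s_{(j+2,2^{k-1})} = s_{(2^k,1^m)}`,
as an identity of symmetric polynomials in any number `N` of variables. -/
theorem stmt0 (N m k : ℕ) (hk : 1 ≤ k) :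
    ∑ j ∈ Finset.range (m + 1),
      (-1 : MvPolynomial (Fin N) ℤ) ^ j * MvPolynomial.esymm (Fin N) ℤ (m - j) *
        schur N ((j + 2) :: List.replicate (k - 1) 2) =
    schur N (List.replicate k 2 ++ List.replicate m 1) := by
  obtain ⟨k, rfl⟩ := Nat.exists_eq_add_of_le' hk
  rw [schur_replicate_append_replicate_one, Nat.add_sub_cancel]
end

section
/- For any partition λ = (3^i, 2^j, 1^{n-3i-2j}) of n (with n-3i-2j ≥ 0), the number of standard Young tableaux of shape λ equals (j+1)·(n-3i-j+2)·(n-3i-2j+1)·n! / (i!·(i+j+1)!·(n-2i-j+2)!). -/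
open Finset

/-- The number of standard Young tableaux on a given finite set of cells
(pairs `(row, column)`): bijective fillings by `1, …, #cells` that strictly
increase along rows and down columns. -/
noncomputable def sytCard (cells : Finset (ℕ × ℕ)) : ℕ :=
  Nat.card {f : ℕ × ℕ → ℕ //
    (∀ p ∉ cells, f p = 0) ∧
    Set.BijOn f (↑cells) (Set.Icc 1 cells.card) ∧
    (∀ p q, p ∈ cells → q ∈ cells → p.1 = q.1 → p.2 < q.2 → f p < f q) ∧
    (∀ p q, p ∈ cells → q ∈ cells → p.2 = q.2 → p.1 < q.1 → f p < f q)}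

/-- The Young diagram of the partition `(3^i, 2^j, 1^m)`. -/
def shape3 (i j m : ℕ) : Finset (ℕ × ℕ) :=
  (Finset.range (i + j + m) ×ˢ Finset.range 3).filter
    (fun p => p.2 < if p.1 < i then 3 else if p.1 < i + j then 2 else 1)

def IsSYT (cells : Finset (ℕ × ℕ)) (f : ℕ × ℕ → ℕ) : Prop :=
  (∀ p ∉ cells, f p = 0) ∧
  Set.BijOn f (↑cells) (Set.Icc 1 cells.card) ∧
  (∀ p q, p ∈ cells → q ∈ cells → p.1 = q.1 → p.2 < q.2 → f p < f q) ∧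
  (∀ p q, p ∈ cells → q ∈ cells → p.2 = q.2 → p.1 < q.1 → f p < f q)

lemma sytCard_def (cells : Finset (ℕ × ℕ)) :
    sytCard cells = Nat.card {f // IsSYT cells f} := rfl

instance sytFinite (cells : Finset (ℕ × ℕ)) : Finite {f // IsSYT cells f} := by
  have key : ∀ f : {f // IsSYT cells f}, ∀ c : cells, f.1 c.1 < cells.card + 1 := by
    rintro ⟨f, h0, hbij, _⟩ ⟨c, hc⟩
    show f c < cells.card + 1
    have := hbij.mapsTo (show c ∈ (↑cells : Set (ℕ × ℕ)) by exact_mod_cast hc)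
    simp only [Set.mem_Icc] at this
    omega
  apply Finite.of_injective
    (fun f : {f // IsSYT cells f} => fun c : cells => (⟨f.1 c.1, key f c⟩ : Fin (cells.card + 1)))
  rintro ⟨f, hf⟩ ⟨g, hg⟩ h
  apply Subtype.ext
  show f = g
  funext p
  by_cases hp : p ∈ cells
  · show f p = g p
    have := congrFun h ⟨p, hp⟩
    simpa using this
  · rw [hf.1 p hp, hg.1 p hp]

/-- Cells that are maximal in their row and in their column. -/
def corners (cells : Finset (ℕ × ℕ)) : Finset (ℕ × ℕ) :=
  cells.filter (fun c =>
    (∀ q ∈ cells, q.1 = c.1 → q.2 ≤ c.2) ∧ (∀ q ∈ cells, q.2 = c.2 → q.1 ≤ c.1))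

lemma mem_corners {cells : Finset (ℕ × ℕ)} {c : ℕ × ℕ} :
    c ∈ corners cells ↔ c ∈ cells ∧
      (∀ q ∈ cells, q.1 = c.1 → q.2 ≤ c.2) ∧ (∀ q ∈ cells, q.2 = c.2 → q.1 ≤ c.1) := by
  simp [corners]

lemma isSYT_erase_max {cells : Finset (ℕ × ℕ)} {f : ℕ × ℕ → ℕ} (hf : IsSYT cells f)
    {c : ℕ × ℕ} (hc : c ∈ cells) (hfc : f c = cells.card) :
    c ∈ corners cells ∧ IsSYT (cells.erase c) (Function.update f c 0) := by
  obtain ⟨h0, hbij, hrow, hcol⟩ := hf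
  have hcS : (c : ℕ × ℕ) ∈ (↑cells : Set (ℕ × ℕ)) := by exact_mod_cast hc
  have hmax : ∀ q ∈ cells, q ≠ c → f q < cells.card := by
    intro q hq hqc
    have h1 := hbij.mapsTo (show q ∈ (↑cells : Set (ℕ × ℕ)) by exact_mod_cast hq)
    simp only [Set.mem_Icc] at h1
    rcases lt_or_eq_of_le h1.2 with h | h
    · exact h
    · exact absurd (hbij.injOn (by exact_mod_cast hq) hcS (by rw [h, hfc])) hqc
  have hcorner : c ∈ corners cells := by
    rw [mem_corners]
    refine ⟨hc, ?_, ?_⟩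
    · intro q hq hq1
      by_contra hlt
      push_neg at hlt
      exact absurd (hrow c q hc hq hq1.symm hlt) (by
        have := hmax q hq (fun h => by simp [h] at hlt)
        omega)
    · intro q hq hq2
      by_contra hlt
      push_neg at hlt
      exact absurd (hcol c q hc hq hq2.symm hlt) (by
        have := hmax q hq (fun h => by simp [h] at hlt)
        omega)
  have hcard : (cells.erase c).card = cells.card - 1 := Finset.card_erase_of_mem hc
  have hupd : ∀ p ∈ cells.erase c, Function.update f c 0 p = f p := by
    intro p hp
    have : p ≠ c := Finset.ne_of_mem_erase hp
    simp [Function.update_of_ne this]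
  refine ⟨hcorner, ?_, ?_, ?_, ?_⟩
  · intro p hp
    by_cases hpc : p = c
    · subst hpc; simp
    · rw [Function.update_of_ne hpc]
      exact h0 p (fun h => hp (Finset.mem_erase.mpr ⟨hpc, h⟩))
  · rw [hcard]
    have hpos : 1 ≤ cells.card := Finset.card_pos.mpr ⟨c, hc⟩
    refine ⟨?_, ?_, ?_⟩
    · intro p hp
      have hp' : p ∈ cells.erase c := by exact_mod_cast hp
      rw [hupd p hp']
      have hpc := Finset.mem_of_mem_erase hp'
      have h1 := hbij.mapsTo (show p ∈ (↑cells : Set (ℕ × ℕ)) by exact_mod_cast hpc)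
      simp only [Set.mem_Icc] at h1 ⊢
      have := hmax p hpc (Finset.ne_of_mem_erase hp')
      omega
    · intro p hp q hq hpq
      have hp' : p ∈ cells.erase c := by exact_mod_cast hp
      have hq' : q ∈ cells.erase c := by exact_mod_cast hq
      rw [hupd p hp', hupd q hq'] at hpq
      exact hbij.injOn (by exact_mod_cast Finset.mem_of_mem_erase hp')
        (by exact_mod_cast Finset.mem_of_mem_erase hq') hpq
    · intro y hy
      simp only [Set.mem_Icc] at hy
      have hy' : y ∈ Set.Icc 1 cells.card := by simp only [Set.mem_Icc]; omega
      obtain ⟨p, hp, hfp⟩ := hbij.surjOn hy'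
      have hpc : p ≠ c := by
        intro h
        rw [h, hfc] at hfp
        omega
      have hpe : p ∈ cells.erase c := Finset.mem_erase.mpr ⟨hpc, by exact_mod_cast hp⟩
      exact ⟨p, by exact_mod_cast hpe, by rw [hupd p hpe]; exact hfp⟩
  · intro p q hp hq h1 h2
    rw [hupd p hp, hupd q hq]
    exact hrow p q (Finset.mem_of_mem_erase hp) (Finset.mem_of_mem_erase hq) h1 h2
  · intro p q hp hq h1 h2
    rw [hupd p hp, hupd q hq]
    exact hcol p q (Finset.mem_of_mem_erase hp) (Finset.mem_of_mem_erase hq) h1 h2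

lemma isSYT_insert {cells : Finset (ℕ × ℕ)} {c : ℕ × ℕ} (hc : c ∈ corners cells)
    {g : ℕ × ℕ → ℕ} (hg : IsSYT (cells.erase c) g) :
    IsSYT cells (Function.update g c cells.card) := by
  rw [mem_corners] at hc
  obtain ⟨hcmem, hrowmax, hcolmax⟩ := hc
  obtain ⟨h0, hbij, hrow, hcol⟩ := hg
  have hcard : (cells.erase c).card = cells.card - 1 := Finset.card_erase_of_mem hcmem
  have hpos : 1 ≤ cells.card := Finset.card_pos.mpr ⟨c, hcmem⟩
  rw [hcard] at hbij
  have hlt : ∀ p ∈ cells.erase c, 1 ≤ g p ∧ g p ≤ cells.card - 1 := by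
    intro p hp
    have := hbij.mapsTo (show p ∈ (↑(cells.erase c) : Set (ℕ × ℕ)) by exact_mod_cast hp)
    simpa only [Set.mem_Icc] using this
  refine ⟨?_, ⟨?_, ?_, ?_⟩, ?_, ?_⟩
  · intro p hp
    have hpc : p ≠ c := fun h => hp (h ▸ hcmem)
    rw [Function.update_of_ne hpc]
    exact h0 p (fun h => hp (Finset.mem_of_mem_erase h))
  · intro p hp
    have hp' : p ∈ cells := by exact_mod_cast hp
    by_cases hpc : p = c
    · subst hpc
      simp only [Function.update_self, Set.mem_Icc]
      omega
    · rw [Function.update_of_ne hpc]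
      have := hlt p (Finset.mem_erase.mpr ⟨hpc, hp'⟩)
      simp only [Set.mem_Icc]
      omega
  · intro p hp q hq hpq
    have hp' : p ∈ cells := by exact_mod_cast hp
    have hq' : q ∈ cells := by exact_mod_cast hq
    by_cases hpc : p = c <;> by_cases hqc : q = c
    · rw [hpc, hqc]
    · rw [hpc, Function.update_self, Function.update_of_ne hqc] at hpq
      have := hlt q (Finset.mem_erase.mpr ⟨hqc, hq'⟩)
      omega
    · rw [hqc, Function.update_self, Function.update_of_ne hpc] at hpq
      have := hlt p (Finset.mem_erase.mpr ⟨hpc, hp'⟩)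
      omega
    · rw [Function.update_of_ne hpc, Function.update_of_ne hqc] at hpq
      exact hbij.injOn (by exact_mod_cast Finset.mem_erase.mpr ⟨hpc, hp'⟩)
        (by exact_mod_cast Finset.mem_erase.mpr ⟨hqc, hq'⟩) hpq
  · intro y hy
    simp only [Set.mem_Icc] at hy
    by_cases hyn : y = cells.card
    · exact ⟨c, by exact_mod_cast hcmem, by simp [hyn]⟩
    · have : y ∈ Set.Icc 1 (cells.card - 1) := by simp only [Set.mem_Icc]; omega
      obtain ⟨p, hp, hfp⟩ := hbij.surjOn this
      have hp' : p ∈ cells.erase c := by exact_mod_cast hp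
      refine ⟨p, by exact_mod_cast Finset.mem_of_mem_erase hp', ?_⟩
      rw [Function.update_of_ne (Finset.ne_of_mem_erase hp')]
      exact hfp
  · intro p q hp hq h1 h2
    by_cases hqc : q = c
    · have hpc : p ≠ c := fun h => by rw [h, hqc] at h2; omega
      rw [hqc, Function.update_self, Function.update_of_ne hpc]
      have := hlt p (Finset.mem_erase.mpr ⟨hpc, hp⟩)
      omega
    · have hpc : p ≠ c := by
        intro h
        subst h
        exact absurd (hrowmax q hq h1.symm) (by omega)
      rw [Function.update_of_ne hpc, Function.update_of_ne hqc]
      exact hrow p q (Finset.mem_erase.mpr ⟨hpc, hp⟩) (Finset.mem_erase.mpr ⟨hqc, hq⟩) h1 h2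
  · intro p q hp hq h1 h2
    by_cases hqc : q = c
    · have hpc : p ≠ c := fun h => by rw [h, hqc] at h2; omega
      rw [hqc, Function.update_self, Function.update_of_ne hpc]
      have := hlt p (Finset.mem_erase.mpr ⟨hpc, hp⟩)
      omega
    · have hpc : p ≠ c := by
        intro h
        subst h
        exact absurd (hcolmax q hq h1.symm) (by omega)
      rw [Function.update_of_ne hpc, Function.update_of_ne hqc]
      exact hcol p q (Finset.mem_erase.mpr ⟨hpc, hp⟩) (Finset.mem_erase.mpr ⟨hqc, hq⟩) h1 h2

lemma max_exists_unique {cells : Finset (ℕ × ℕ)} {f : ℕ × ℕ → ℕ} (hf : IsSYT cells f)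
    (hne : cells.Nonempty) : ∃! c, c ∈ cells ∧ f c = cells.card := by
  obtain ⟨h0, hbij, _, _⟩ := hf
  have hpos : 1 ≤ cells.card := Finset.card_pos.mpr hne
  have : cells.card ∈ Set.Icc 1 cells.card := by simp only [Set.mem_Icc]; omega
  obtain ⟨c, hc, hfc⟩ := hbij.surjOn this
  refine ⟨c, ⟨by exact_mod_cast hc, hfc⟩, ?_⟩
  rintro d ⟨hd, hfd⟩
  exact hbij.injOn (by exact_mod_cast hd) hc (by rw [hfd, hfc])

noncomputable def maxCell (cells : Finset (ℕ × ℕ)) (f : ℕ × ℕ → ℕ)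
    (h : ∃! c, c ∈ cells ∧ f c = cells.card) : ℕ × ℕ :=
  Finset.choose (fun c => f c = cells.card) cells h

lemma maxCell_mem {cells : Finset (ℕ × ℕ)} {f : ℕ × ℕ → ℕ}
    {h : ∃! c, c ∈ cells ∧ f c = cells.card} : maxCell cells f h ∈ cells :=
  Finset.choose_mem _ _ _

lemma maxCell_spec {cells : Finset (ℕ × ℕ)} {f : ℕ × ℕ → ℕ}
    {h : ∃! c, c ∈ cells ∧ f c = cells.card} : f (maxCell cells f h) = cells.card :=
  Finset.choose_property (fun c => f c = cells.card) _ _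

lemma maxCell_eq {cells : Finset (ℕ × ℕ)} {f : ℕ × ℕ → ℕ}
    {h : ∃! c, c ∈ cells ∧ f c = cells.card} {c : ℕ × ℕ}
    (hc : c ∈ cells) (hfc : f c = cells.card) : maxCell cells f h = c :=
  h.unique ⟨maxCell_mem, maxCell_spec⟩ ⟨hc, hfc⟩

lemma sytCard_branch (cells : Finset (ℕ × ℕ)) (hne : cells.Nonempty) :
    sytCard cells = ∑ c ∈ corners cells, sytCard (cells.erase c) := by
  classical
  haveI : Fintype {f // IsSYT cells f} := Fintype.ofFinite _
  haveI : ∀ c : ℕ × ℕ, Fintype {f // IsSYT (cells.erase c) f} := fun c => Fintype.ofFinite _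
  rw [sytCard_def, Nat.card_eq_fintype_card, ← Finset.card_univ]
  have key := Finset.card_eq_sum_card_fiberwise
    (f := fun F : {f // IsSYT cells f} => maxCell cells F.1 (max_exists_unique F.2 hne))
    (s := Finset.univ) (t := corners cells)
    (fun F _ => (isSYT_erase_max F.2 maxCell_mem maxCell_spec).1)
  rw [key]
  apply Finset.sum_congr rfl
  intro c hc
  rw [sytCard_def, Nat.card_eq_fintype_card, ← Finset.card_univ]
  have hcm : c ∈ cells := (mem_corners.mp hc).1
  refine Finset.card_bij
    (fun F hF =>
      (⟨Function.update F.1 c 0, by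
        have hφ : maxCell cells F.1 (max_exists_unique F.2 hne) = c :=
          (Finset.mem_filter.mp hF).2
        have h2 := (isSYT_erase_max F.2 (maxCell_mem (h := max_exists_unique F.2 hne))
          (maxCell_spec (h := max_exists_unique F.2 hne))).2
        rwa [hφ] at h2⟩ : {f // IsSYT (cells.erase c) f}))
    (fun _ _ => Finset.mem_univ _) ?_ ?_
  · intro a ha b hb hab
    have hφa : maxCell cells a.1 (max_exists_unique a.2 hne) = c := (Finset.mem_filter.mp ha).2
    have hφb : maxCell cells b.1 (max_exists_unique b.2 hne) = c := (Finset.mem_filter.mp hb).2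
    have hac : a.1 c = cells.card := by
      have := maxCell_spec (h := max_exists_unique a.2 hne); rwa [hφa] at this
    have hbc : b.1 c = cells.card := by
      have := maxCell_spec (h := max_exists_unique b.2 hne); rwa [hφb] at this
    have h := congrArg Subtype.val hab
    apply Subtype.ext
    funext p
    by_cases hp : p = c
    · rw [hp, hac, hbc]
    · have := congrFun h p
      simpa [Function.update_of_ne hp] using this
  · intro G _
    have hcm : c ∈ cells := (mem_corners.mp (by exact hc)).1
    have hgc : G.1 c = 0 := G.2.1 c (Finset.notMem_erase c cells)
    have hf : IsSYT cells (Function.update G.1 c cells.card) := isSYT_insert hc G.2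
    have hmem : (⟨Function.update G.1 c cells.card, hf⟩ : {f // IsSYT cells f}) ∈
        Finset.univ.filter
          (fun F : {f // IsSYT cells f} =>
            maxCell cells F.1 (max_exists_unique F.2 hne) = c) := by
      rw [Finset.mem_filter]
      exact ⟨Finset.mem_univ _, maxCell_eq hcm (by simp)⟩
    refine ⟨⟨Function.update G.1 c cells.card, hf⟩, hmem, ?_⟩
    apply Subtype.ext
    show Function.update (Function.update G.1 c cells.card) c 0 = G.1
    funext p
    by_cases hp : p = c
    · subst hp; simp [hgc]
    · simp [Function.update_of_ne hp]

lemma sytCard_empty : sytCard (∅ : Finset (ℕ × ℕ)) = 1 := by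
  rw [sytCard_def]
  have hW : IsSYT (∅ : Finset (ℕ × ℕ)) (fun _ => 0) := by
    refine ⟨fun p _ => rfl, ⟨?_, ?_, ?_⟩, ?_, ?_⟩ <;> simp [Set.MapsTo, Set.InjOn, Set.SurjOn]
  haveI : Subsingleton {f // IsSYT (∅ : Finset (ℕ × ℕ)) f} := by
    refine ⟨fun a b => Subtype.ext ?_⟩
    funext p
    rw [a.2.1 p (Finset.notMem_empty p), b.2.1 p (Finset.notMem_empty p)]
  rw [Nat.card_eq_one_iff_unique]
  exact ⟨inferInstance, ⟨⟨fun _ => 0, hW⟩⟩⟩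

lemma mem_shape3 {i j m : ℕ} {p : ℕ × ℕ} :
    p ∈ shape3 i j m ↔ (p.1 < i ∧ p.2 < 3) ∨ (i ≤ p.1 ∧ p.1 < i + j ∧ p.2 < 2) ∨
      (i + j ≤ p.1 ∧ p.1 < i + j + m ∧ p.2 < 1) := by
  simp only [shape3, Finset.mem_filter, Finset.mem_product, Finset.mem_range]
  split_ifs with h1 h2 <;> omega

lemma corners_shape3 {i j m : ℕ} {p : ℕ × ℕ} :
    p ∈ corners (shape3 i j m) ↔
      (0 < i ∧ p = (i - 1, 2)) ∨ (0 < j ∧ p = (i + j - 1, 1)) ∨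
      (0 < m ∧ p = (i + j + m - 1, 0)) := by
  obtain ⟨r, c⟩ := p
  rw [mem_corners]
  simp only [mem_shape3, Prod.mk.injEq]
  constructor
  · rintro ⟨hmem, hrow, hcol⟩
    rcases hmem with ⟨h1, h2⟩ | ⟨h1, h2, h3⟩ | ⟨h1, h2, h3⟩
    · -- r < i, so c = 2 (else right neighbor) and r = i-1 (else below)
      have hc2 : c = 2 := by
        by_contra hne
        have := hrow (r, c + 1) (by simp only [mem_shape3]; omega) rfl
        simp at this <;> omega
      subst hc2
      have hr : r = i - 1 := by
        by_contra hne
        have := hcol (r + 1, 2) (by simp only [mem_shape3]; omega) rfl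
        simp at this <;> omega
      exact Or.inl ⟨by omega, by omega, rfl⟩
    · have hc2 : c = 1 := by
        by_contra hne
        have := hrow (r, c + 1) (by simp only [mem_shape3]; omega) rfl
        simp at this <;> omega
      subst hc2
      have hr : r = i + j - 1 := by
        by_contra hne
        have := hcol (r + 1, 1) (by simp only [mem_shape3]; omega) rfl
        simp at this <;> omega
      exact Or.inr (Or.inl ⟨by omega, by omega, rfl⟩)
    · have hc2 : c = 0 := by omega
      subst hc2
      have hr : r = i + j + m - 1 := by
        by_contra hne
        have := hcol (r + 1, 0) (by simp only [mem_shape3]; omega) rfl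
        simp at this <;> omega
      exact Or.inr (Or.inr ⟨by omega, by omega, rfl⟩)
  · rintro (⟨hi, hr, hc⟩ | ⟨hj, hr, hc⟩ | ⟨hm, hr, hc⟩) <;> subst hr <;> subst hc
    · refine ⟨Or.inl ⟨by omega, by omega⟩, ?_, ?_⟩
      · rintro ⟨a, b⟩ hq rfl
        simp only [mem_shape3] at hq; simp <;> omega
      · rintro ⟨a, b⟩ hq rfl
        simp only [mem_shape3] at hq; simp <;> omega
    · refine ⟨Or.inr (Or.inl ⟨by omega, by omega, by omega⟩), ?_, ?_⟩
      · rintro ⟨a, b⟩ hq rfl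
        simp only [mem_shape3] at hq; simp <;> omega
      · rintro ⟨a, b⟩ hq rfl
        simp only [mem_shape3] at hq; simp <;> omega
    · refine ⟨Or.inr (Or.inr ⟨by omega, by omega, by omega⟩), ?_, ?_⟩
      · rintro ⟨a, b⟩ hq rfl
        simp only [mem_shape3] at hq; simp <;> omega
      · rintro ⟨a, b⟩ hq rfl
        simp only [mem_shape3] at hq; simp <;> omega

lemma erase_shape3_top {i j m : ℕ} (hi : 0 < i) :
    (shape3 i j m).erase (i - 1, 2) = shape3 (i - 1) (j + 1) m := by
  ext ⟨r, c⟩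
  simp only [Finset.mem_erase, mem_shape3, Prod.mk.injEq, ne_eq, not_and]
  constructor
  · rintro ⟨h1, h2⟩; omega
  · intro h
    constructor
    · intro hr; omega
    · omega

lemma erase_shape3_mid {i j m : ℕ} (hj : 0 < j) :
    (shape3 i j m).erase (i + j - 1, 1) = shape3 i (j - 1) (m + 1) := by
  ext ⟨r, c⟩
  simp only [Finset.mem_erase, mem_shape3, Prod.mk.injEq, ne_eq, not_and]
  constructor
  · rintro ⟨h1, h2⟩; omega
  · intro h
    constructor
    · intro hr; omega
    · omega

lemma erase_shape3_bot {i j m : ℕ} (hm : 0 < m) :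
    (shape3 i j m).erase (i + j + m - 1, 0) = shape3 i j (m - 1) := by
  ext ⟨r, c⟩
  simp only [Finset.mem_erase, mem_shape3, Prod.mk.injEq, ne_eq, not_and]
  constructor
  · rintro ⟨h1, h2⟩; omega
  · intro h
    constructor
    · intro hr; omega
    · omega

noncomputable def F3 (i j m : ℕ) : ℚ :=
  (j + 1) * (m + j + 2) * (m + 1) * (Nat.factorial (3 * i + 2 * j + m)) /
    (Nat.factorial i * Nat.factorial (i + j + 1) * Nat.factorial (m + i + j + 2))

lemma fact_cast_succ (k : ℕ) : ((Nat.factorial (k + 1) : ℕ) : ℚ) = (k + 1) * Nat.factorial k := by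
  exact_mod_cast Nat.factorial_succ k

lemma fact_cast_ne_zero (k : ℕ) : ((Nat.factorial k : ℕ) : ℚ) ≠ 0 := by
  exact_mod_cast Nat.factorial_ne_zero k

lemma shape3_zero : shape3 0 0 0 = ∅ := by
  ext ⟨r, c⟩
  simp [mem_shape3]

lemma key3 : ∀ N i j m : ℕ, 3 * i + 2 * j + m ≤ N →
    (sytCard (shape3 i j m) : ℚ) = F3 i j m := by
  intro N
  induction N with
  | zero =>
    intro i j m h
    obtain ⟨rfl, rfl, rfl⟩ : i = 0 ∧ j = 0 ∧ m = 0 := by omega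
    rw [shape3_zero, sytCard_empty, F3]
    norm_num [Nat.factorial]
  | succ N ih =>
    intro i j m h
    rcases Nat.eq_zero_or_pos (i + j + m) with h0 | hpos
    · obtain ⟨rfl, rfl, rfl⟩ : i = 0 ∧ j = 0 ∧ m = 0 := by omega
      rw [shape3_zero, sytCard_empty, F3]
      norm_num [Nat.factorial]
    · have hne : (shape3 i j m).Nonempty := ⟨(0, 0), by rw [mem_shape3]; simp; omega⟩
      rw [sytCard_branch _ hne]
      rcases i with _ | i' <;> rcases j with _ | j' <;> rcases m with _ | m'
      · omega
      · -- i = 0, j = 0, m = m'+1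
        have hc : corners (shape3 0 0 (m' + 1)) = {(m', 0)} := by
          ext p
          rw [corners_shape3]
          simp
        rw [hc, Finset.sum_singleton,
          show ((m', 0) : ℕ × ℕ) = (0 + 0 + (m' + 1) - 1, 0) by simp,
          erase_shape3_bot (by omega)]
        push_cast [ih 0 0 m' (by omega)]
        simp only [F3]
        rw [show 3 * 0 + 2 * 0 + m' = m' by ring,
            show 3 * 0 + 2 * 0 + (m' + 1) = m' + 1 by ring,
            show m' + 0 + 0 + 2 = m' + 2 by ring,
            show m' + 1 + 0 + 0 + 2 = m' + 2 + 1 by ring,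
            fact_cast_succ m', fact_cast_succ (m' + 2)]
        simp only [Nat.factorial_zero, Nat.factorial_one]
        push_cast
        field_simp
        ring
      · -- i = 0, j = j'+1, m = 0
        have hc : corners (shape3 0 (j' + 1) 0) = {(j', 1)} := by
          ext p
          rw [corners_shape3]
          simp
        rw [hc, Finset.sum_singleton,
          show ((j', 1) : ℕ × ℕ) = (0 + (j' + 1) - 1, 1) by simp,
          erase_shape3_mid (by omega)]
        push_cast [ih 0 j' 1 (by omega)]
        simp only [F3]
        rw [show 3 * 0 + 2 * j' + 1 = 2 * j' + 1 by ring,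
            show 3 * 0 + 2 * (j' + 1) + 0 = 2 * j' + 1 + 1 by ring,
            show 0 + j' + 1 = j' + 1 by ring,
            show 0 + (j' + 1) + 1 = j' + 1 + 1 by ring,
            show 1 + 0 + j' + 2 = j' + 3 by ring,
            show 0 + 0 + (j' + 1) + 2 = j' + 3 by ring,
            fact_cast_succ (2 * j' + 1), fact_cast_succ (j' + 1)]
        push_cast
        field_simp
        ring
      · -- i = 0, j = j'+1, m = m'+1
        have hc : corners (shape3 0 (j' + 1) (m' + 1)) = {(j', 1), (j' + m' + 1, 0)} := by
          ext p
          rw [corners_shape3]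
          simp only [Finset.mem_insert, Finset.mem_singleton]
          constructor
          · rintro (⟨h1, h2⟩ | ⟨h1, h2⟩ | ⟨h1, h2⟩) <;> subst h2 <;> simp_all <;> omega
          · rintro (rfl | rfl)
            · right; left; constructor; omega; simp
            · right; right; constructor; omega
              simp; omega
        rw [hc, Finset.sum_insert (by simp), Finset.sum_singleton,
          show ((j', 1) : ℕ × ℕ) = (0 + (j' + 1) - 1, 1) by simp,
          show ((j' + m' + 1, 0) : ℕ × ℕ) = (0 + (j' + 1) + (m' + 1) - 1, 0) by simp; omega,
          erase_shape3_mid (by omega), erase_shape3_bot (by omega)]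
        push_cast [ih 0 j' (m' + 2) (by omega), ih 0 (j' + 1) m' (by omega)]
        simp only [F3]
        rw [show 3 * 0 + 2 * j' + (m' + 2) = 2 * j' + m' + 2 by ring,
            show 3 * 0 + 2 * (j' + 1) + m' = 2 * j' + m' + 2 by ring,
            show 3 * 0 + 2 * (j' + 1) + (m' + 1) = 2 * j' + m' + 2 + 1 by ring,
            show 0 + j' + 1 = j' + 1 by ring,
            show 0 + (j' + 1) + 1 = j' + 1 + 1 by ring,
            show m' + 2 + 0 + j' + 2 = m' + j' + 3 + 1 by ring,
            show m' + 0 + (j' + 1) + 2 = m' + j' + 3 by ring,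
            show m' + 1 + 0 + (j' + 1) + 2 = m' + j' + 3 + 1 by ring,
            fact_cast_succ (2 * j' + m' + 2), fact_cast_succ (j' + 1), fact_cast_succ (m' + j' + 3)]
        push_cast
        field_simp
        ring
      · -- i = i'+1, j = 0, m = 0
        have hc : corners (shape3 (i' + 1) 0 0) = {(i', 2)} := by
          ext p
          rw [corners_shape3]
          simp
        rw [hc, Finset.sum_singleton,
          show ((i', 2) : ℕ × ℕ) = (i' + 1 - 1, 2) by simp,
          erase_shape3_top (by omega)]
        push_cast [ih i' 1 0 (by omega)]
        simp only [F3]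
        rw [show 3 * i' + 2 * 1 + 0 = 3 * i' + 2 by ring,
            show 3 * (i' + 1) + 2 * 0 + 0 = 3 * i' + 2 + 1 by ring,
            show i' + 1 + 1 = i' + 2 by ring,
            show i' + 1 + 0 + 1 = i' + 2 by ring,
            show 0 + i' + 1 + 2 = i' + 3 by ring,
            show 0 + (i' + 1) + 0 + 2 = i' + 3 by ring,
            fact_cast_succ (3 * i' + 2), fact_cast_succ i']
        push_cast
        field_simp
        ring
      · -- i = i'+1, j = 0, m = m'+1
        have hc : corners (shape3 (i' + 1) 0 (m' + 1)) = {(i', 2), (i' + m' + 1, 0)} := by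
          ext p
          rw [corners_shape3]
          simp only [Finset.mem_insert, Finset.mem_singleton]
          constructor
          · rintro (⟨h1, h2⟩ | ⟨h1, h2⟩ | ⟨h1, h2⟩) <;> subst h2 <;> simp_all <;> omega
          · rintro (rfl | rfl)
            · left; constructor; omega; simp
            · right; right; constructor; omega
              simp; omega
        rw [hc, Finset.sum_insert (by simp), Finset.sum_singleton,
          show ((i', 2) : ℕ × ℕ) = (i' + 1 - 1, 2) by simp,
          show ((i' + m' + 1, 0) : ℕ × ℕ) = (i' + 1 + 0 + (m' + 1) - 1, 0) by simp; omega,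
          erase_shape3_top (by omega), erase_shape3_bot (by omega)]
        push_cast [ih i' 1 (m' + 1) (by omega), ih (i' + 1) 0 m' (by omega)]
        simp only [F3]
        rw [show 3 * i' + 2 * 1 + (m' + 1) = 3 * i' + m' + 3 by ring,
            show 3 * (i' + 1) + 2 * 0 + m' = 3 * i' + m' + 3 by ring,
            show 3 * (i' + 1) + 2 * 0 + (m' + 1) = 3 * i' + m' + 3 + 1 by ring,
            show i' + 1 + 1 = i' + 2 by ring,
            show i' + 1 + 0 + 1 = i' + 2 by ring,
            show m' + 1 + i' + 1 + 2 = m' + i' + 3 + 1 by ring,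
            show m' + (i' + 1) + 0 + 2 = m' + i' + 3 by ring,
            show m' + 1 + (i' + 1) + 0 + 2 = m' + i' + 3 + 1 by ring,
            fact_cast_succ (3 * i' + m' + 3), fact_cast_succ (m' + i' + 3), fact_cast_succ i']
        push_cast
        field_simp
        ring
      · -- i = i'+1, j = j'+1, m = 0
        have hc : corners (shape3 (i' + 1) (j' + 1) 0) = {(i', 2), (i' + j' + 1, 1)} := by
          ext p
          rw [corners_shape3]
          simp only [Finset.mem_insert, Finset.mem_singleton]
          constructor
          · rintro (⟨h1, h2⟩ | ⟨h1, h2⟩ | ⟨h1, h2⟩) <;> subst h2 <;> simp_all <;> omega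
          · rintro (rfl | rfl)
            · left; constructor; omega; simp
            · right; left; constructor; omega
              simp; omega
        rw [hc, Finset.sum_insert (by simp), Finset.sum_singleton,
          show ((i', 2) : ℕ × ℕ) = (i' + 1 - 1, 2) by simp,
          show ((i' + j' + 1, 1) : ℕ × ℕ) = (i' + 1 + (j' + 1) - 1, 1) by simp; omega,
          erase_shape3_top (by omega), erase_shape3_mid (by omega)]
        push_cast [ih i' (j' + 2) 0 (by omega), ih (i' + 1) j' 1 (by omega)]
        simp only [F3]
        rw [show 3 * i' + 2 * (j' + 2) + 0 = 3 * i' + 2 * j' + 4 by ring,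
            show 3 * (i' + 1) + 2 * j' + 1 = 3 * i' + 2 * j' + 4 by ring,
            show 3 * (i' + 1) + 2 * (j' + 1) + 0 = 3 * i' + 2 * j' + 4 + 1 by ring,
            show i' + (j' + 2) + 1 = i' + j' + 2 + 1 by ring,
            show i' + 1 + j' + 1 = i' + j' + 2 by ring,
            show i' + 1 + (j' + 1) + 1 = i' + j' + 2 + 1 by ring,
            show 0 + i' + (j' + 2) + 2 = i' + j' + 4 by ring,
            show 1 + (i' + 1) + j' + 2 = i' + j' + 4 by ring,
            show 0 + (i' + 1) + (j' + 1) + 2 = i' + j' + 4 by ring,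
            fact_cast_succ (3 * i' + 2 * j' + 4), fact_cast_succ (i' + j' + 2), fact_cast_succ i']
        push_cast
        field_simp
        ring
      · -- i = i'+1, j = j'+1, m = m'+1
        have hc : corners (shape3 (i' + 1) (j' + 1) (m' + 1)) =
            {(i', 2), (i' + j' + 1, 1), (i' + j' + m' + 2, 0)} := by
          ext p
          rw [corners_shape3]
          simp only [Finset.mem_insert, Finset.mem_singleton]
          constructor
          · rintro (⟨h1, h2⟩ | ⟨h1, h2⟩ | ⟨h1, h2⟩) <;> subst h2 <;> simp_all <;> omega
          · rintro (rfl | rfl | rfl)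
            · left; constructor; omega; simp
            · right; left; constructor; omega
              simp; omega
            · right; right; constructor; omega
              simp; omega
        rw [hc, Finset.sum_insert (by simp), Finset.sum_insert (by simp),
          Finset.sum_singleton,
          show ((i', 2) : ℕ × ℕ) = (i' + 1 - 1, 2) by simp,
          show ((i' + j' + 1, 1) : ℕ × ℕ) = (i' + 1 + (j' + 1) - 1, 1) by simp; omega,
          show ((i' + j' + m' + 2, 0) : ℕ × ℕ) = (i' + 1 + (j' + 1) + (m' + 1) - 1, 0) by
            simp; omega,
          erase_shape3_top (by omega), erase_shape3_mid (by omega), erase_shape3_bot (by omega)]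
        push_cast [ih i' (j' + 2) (m' + 1) (by omega), ih (i' + 1) j' (m' + 2) (by omega),
          ih (i' + 1) (j' + 1) m' (by omega)]
        simp only [F3]
        rw [show 3 * i' + 2 * (j' + 2) + (m' + 1) = 3 * i' + 2 * j' + m' + 4 + 1 by ring,
            show 3 * (i' + 1) + 2 * j' + (m' + 2) = 3 * i' + 2 * j' + m' + 4 + 1 by ring,
            show 3 * (i' + 1) + 2 * (j' + 1) + m' = 3 * i' + 2 * j' + m' + 4 + 1 by ring,
            show 3 * (i' + 1) + 2 * (j' + 1) + (m' + 1) = 3 * i' + 2 * j' + m' + 4 + 1 + 1 by ring,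
            show i' + (j' + 2) + 1 = i' + j' + 2 + 1 by ring,
            show i' + 1 + j' + 1 = i' + j' + 2 by ring,
            show i' + 1 + (j' + 1) + 1 = i' + j' + 2 + 1 by ring,
            show m' + 1 + i' + (j' + 2) + 2 = m' + i' + j' + 4 + 1 by ring,
            show m' + 2 + (i' + 1) + j' + 2 = m' + i' + j' + 4 + 1 by ring,
            show m' + (i' + 1) + (j' + 1) + 2 = m' + i' + j' + 4 by ring,
            show m' + 1 + (i' + 1) + (j' + 1) + 2 = m' + i' + j' + 4 + 1 by ring,
            fact_cast_succ (3 * i' + 2 * j' + m' + 4 + 1), fact_cast_succ (3 * i' + 2 * j' + m' + 4),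
            fact_cast_succ (i' + j' + 2), fact_cast_succ (m' + i' + j' + 4), fact_cast_succ i']
        push_cast
        field_simp
        ring

/-- The number of standard Young tableaux of shape `(3^i, 2^j, 1^{n-3i-2j})`
(a partition of `n`) equals
`(j+1)·(n-3i-j+2)·(n-3i-2j+1)·n! / (i!·(i+j+1)!·(n-2i-j+2)!)`. -/
theorem stmt3 (n i j : ℕ) (h : 3 * i + 2 * j ≤ n) :
    (sytCard (shape3 i j (n - 3 * i - 2 * j)) : ℚ) =
      ((j + 1 : ℕ) : ℚ) * ((n - 3 * i - j + 2 : ℕ) : ℚ) *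
        ((n - 3 * i - 2 * j + 1 : ℕ) : ℚ) * (Nat.factorial n) /
        ((Nat.factorial i) * (Nat.factorial (i + j + 1)) *
          (Nat.factorial (n - 2 * i - j + 2))) := by
  set m := n - 3 * i - 2 * j with hm
  rw [key3 (3 * i + 2 * j + m) i j m le_rfl, F3,
    show n - 3 * i - j + 2 = m + j + 2 by omega,
    show n - 3 * i - 2 * j + 1 = m + 1 by omega,
    show n - 2 * i - j + 2 = m + i + j + 2 by omega,
    show n = 3 * i + 2 * j + m by omega]
  push_cast
  ring
end

section
/- Define d_{n,k} = Σ_{i=2k}^{n} (n-i+1)·C(n-k+1, i-2k). Then for all positive integers n, k with n ≥ 2k+1: (n-2k+1)·d_{n+1,k} = -2(n-k+1)·d_{n-1,k} + (3n-5k+4)·d_{n,k}. -/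
/-!
Substituting `i = 2k + j` turns `d n k` into the weighted partial row sum
`W(N, m) = Σ_{j<m} (m - j) C(N, j)` with `N = n - k + 1` and `m = n - 2k + 1`, and the
recurrence becomes `(m+1) W(N+2, m+2) + 2(N+1) W(N, m) = (2m+N+4) W(N+1, m+1)`.
Both `W` and the partial row sums `S(N, m) = Σ_{j≤m} C(N, j)` obey Pascal's rule, `W` is the
running sum of `S`, and absorption `(j+1) C(N+1, j+1) = (N+1) C(N, j)` gives
`(m+1) S(N+1, m+1) = (N+2) S(N, m) + 2 W(N, m)`; the recurrence is a linear combination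
of these identities.
-/

open Finset

/-- `d n k = Σ_{i=2k}^{n} (n-i+1)·C(n-k+1, i-2k)`. -/
def d (n k : ℕ) : ℕ :=
  ∑ i ∈ Finset.Icc (2 * k) n, (n - i + 1) * Nat.choose (n - k + 1) (i - 2 * k)

def binomPartialSum (N m : ℕ) : ℤ := ∑ j ∈ range (m + 1), (N.choose j : ℤ)

def weightedBinomSum (N m : ℕ) : ℤ := ∑ j ∈ range m, ((m : ℤ) - j) * (N.choose j : ℤ)

lemma binomPartialSum_succ_right (N m : ℕ) :
    binomPartialSum N (m + 1) = binomPartialSum N m + (N.choose (m + 1) : ℤ) :=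
  sum_range_succ _ _

lemma binomPartialSum_succ_succ (N m : ℕ) :
    binomPartialSum (N + 1) (m + 1) = binomPartialSum N (m + 1) + binomPartialSum N m := by
  simp only [binomPartialSum, sum_range_succ' _ (m + 1), Nat.choose_succ_succ, Nat.cast_add,
    sum_add_distrib, Nat.choose_zero_right]
  ring

lemma weightedBinomSum_succ_right (N m : ℕ) :
    weightedBinomSum N (m + 1) = weightedBinomSum N m + binomPartialSum N m := by
  have split (j : ℕ) : (((m + 1 : ℕ) : ℤ) - j) * (N.choose j : ℤ) =
      ((m : ℤ) - j) * (N.choose j : ℤ) + (N.choose j : ℤ) := by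
    push_cast
    ring
  simp only [weightedBinomSum, binomPartialSum, split, sum_add_distrib,
    sum_range_succ (fun j => ((m : ℤ) - j) * (N.choose j : ℤ)), sub_self, zero_mul, add_zero]

lemma weightedBinomSum_succ_succ (N m : ℕ) :
    weightedBinomSum (N + 1) (m + 1) = weightedBinomSum N (m + 1) + weightedBinomSum N m := by
  induction m with
  | zero => simp [weightedBinomSum]
  | succ m ih =>
    linear_combination ih + weightedBinomSum_succ_right (N + 1) (m + 1)
      + binomPartialSum_succ_succ N m - weightedBinomSum_succ_right N (m + 1)
      - weightedBinomSum_succ_right N m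

lemma succ_mul_binomPartialSum_succ (N m : ℕ) :
    ((m : ℤ) + 1) * binomPartialSum (N + 1) (m + 1) =
      ((N : ℤ) + 2) * binomPartialSum N m + 2 * weightedBinomSum N m := by
  induction m with
  | zero =>
    simp only [binomPartialSum, weightedBinomSum, sum_range_succ, sum_range_zero,
      Nat.choose_zero_right, Nat.choose_one_right]
    push_cast
    ring
  | succ m ih =>
    have absorption : ((m : ℤ) + 2) * ((N + 1).choose (m + 2) : ℤ) =
        ((N : ℤ) + 1) * (N.choose (m + 1) : ℤ) := by
      have := Nat.add_one_mul_choose_eq N (m + 1)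
      push_cast [← Nat.cast_inj (R := ℤ)] at this
      linear_combination -this
    push_cast
    linear_combination ih + absorption + binomPartialSum_succ_succ N m
      + ((m : ℤ) + 2) * binomPartialSum_succ_right (N + 1) (m + 1)
      - ((N : ℤ) + 1) * binomPartialSum_succ_right N m
      - 2 * weightedBinomSum_succ_right N m

lemma weightedBinomSum_recurrence (N m : ℕ) :
    ((m : ℤ) + 1) * weightedBinomSum (N + 2) (m + 2) + 2 * ((N : ℤ) + 1) * weightedBinomSum N m =
      (2 * (m : ℤ) + N + 4) * weightedBinomSum (N + 1) (m + 1) := by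
  linear_combination ((m : ℤ) + 1) * weightedBinomSum_succ_succ (N + 1) (m + 1)
    + ((m : ℤ) + 1) * weightedBinomSum_succ_right (N + 1) (m + 1)
    + succ_mul_binomPartialSum_succ N m
    - ((N : ℤ) + 2) * weightedBinomSum_succ_succ N m
    - ((N : ℤ) + 2) * weightedBinomSum_succ_right N m

lemma d_eq_weightedBinomSum (n k : ℕ) (h : 2 * k ≤ n) :
    (d n k : ℤ) = weightedBinomSum (n - k + 1) (n - 2 * k + 1) := by
  rw [d, weightedBinomSum, ← Ico_add_one_right_eq_Icc, sum_Ico_eq_sum_range,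
    show n + 1 - 2 * k = n - 2 * k + 1 by omega]
  push_cast
  refine sum_congr rfl fun j hj => ?_
  rw [mem_range] at hj
  rw [Nat.add_sub_cancel_left, Nat.cast_sub (by omega), Nat.cast_sub h]
  push_cast
  ring

theorem stmt6_general (n k : ℕ) (h : 2 * k + 1 ≤ n) :
    ((n : ℤ) - 2 * k + 1) * (d (n + 1) k : ℤ) =
      -2 * ((n : ℤ) - k + 1) * (d (n - 1) k : ℤ) +
        (3 * (n : ℤ) - 5 * k + 4) * (d n k : ℤ) := by
  rw [d_eq_weightedBinomSum (n + 1) k (by omega), d_eq_weightedBinomSum (n - 1) k (by omega),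
    d_eq_weightedBinomSum n k (by omega), show n + 1 - k + 1 = n - k + 2 by omega,
    show n + 1 - 2 * k + 1 = n - 2 * k + 2 by omega, show n - 1 - k + 1 = n - k by omega,
    show n - 1 - 2 * k + 1 = n - 2 * k by omega]
  have recurrence := weightedBinomSum_recurrence (n - k) (n - 2 * k)
  push_cast [Nat.cast_sub (show k ≤ n by omega), Nat.cast_sub (show 2 * k ≤ n by omega)]
    at recurrence
  linear_combination recurrence

theorem stmt6 (n k : ℕ) (hn : 1 ≤ n) (hk : 1 ≤ k) (h : 2 * k + 1 ≤ n) :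
    ((n : ℤ) - 2 * k + 1) * (d (n + 1) k : ℤ) =
      -2 * ((n : ℤ) - k + 1) * (d (n - 1) k : ℤ) +
        (3 * (n : ℤ) - 5 * k + 4) * (d n k : ℤ) :=
  stmt6_general n k h
end

section
/- Define d_{n,k} = Σ_{i=2k}^{n} (n-i+1)·C(n-k+1, i-2k). Then for all positive integers n, k with n ≥ 2k+1: (n-2k+1)·d_{n-1,k-1} = -2(n-k+1)·d_{n-1,k} + (2n-3k+3)·d_{n,k}. -/
/-!
Reindexing gives `d n k = W (n - k + 1) (n - 2k + 1)` with `W N t = Σ_{j<t} (t - j) C(N, j)`, the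
second iterated partial sum of row `N` of Pascal's triangle. The recurrence becomes a three-term
relation for `W`, proved by induction on `t`: its increment is the same kind of relation for the
partial sums `P N t = Σ_{j<t} C(N, j)`, whose increment in turn is a three-term identity between
binomial coefficients, a consequence of Pascal's rule and `(N + 1) C(N, j) = (j + 1) C(N + 1, j + 1)`.
-/

open Finset

theorem Nat.choose_three_term (M t : ℕ) :
    (t + 2) * (M + 1).choose (t + 2) + 2 * (M + 1) * M.choose t =
      (M + t + 2) * (M + 1).choose (t + 1) := by
  linear_combination -Nat.add_one_mul_choose_eq M (t + 1) + Nat.add_one_mul_choose_eq M t -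
    (M + 1) * Nat.choose_succ_succ' M t

def partialChooseSum (N t : ℕ) : ℕ := ∑ j ∈ range t, N.choose j

def weightedChooseSum (N t : ℕ) : ℕ := ∑ j ∈ range t, (t - j) * N.choose j

theorem partialChooseSum_succ (N t : ℕ) :
    partialChooseSum N (t + 1) = partialChooseSum N t + N.choose t :=
  sum_range_succ _ _

theorem weightedChooseSum_succ (N t : ℕ) :
    weightedChooseSum N (t + 1) = weightedChooseSum N t + partialChooseSum N (t + 1) := by
  rw [weightedChooseSum, weightedChooseSum, partialChooseSum, sum_range_succ, sum_range_succ,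
    Nat.add_sub_cancel_left, one_mul, ← add_assoc, ← sum_add_distrib]
  congr 1
  refine sum_congr rfl fun j hj => ?_
  rw [← add_one_mul (t - j), Nat.sub_add_comm (mem_range.1 hj).le]

theorem partialChooseSum_three_term (M t : ℕ) :
    (t + 1) * partialChooseSum (M + 1) (t + 2) + 2 * (M + 1) * partialChooseSum M t =
      (M + t + 2) * partialChooseSum (M + 1) (t + 1) := by
  induction t with
  | zero => simp [partialChooseSum, sum_range_succ]; ring
  | succ t ih =>
    linear_combination (norm := ring_nf) ih + (t + 2) * partialChooseSum_succ (M + 1) (t + 2) +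
      2 * (M + 1) * partialChooseSum_succ M t -
      (M + t + 2) * partialChooseSum_succ (M + 1) (t + 1) + Nat.choose_three_term M t

theorem weightedChooseSum_three_term (M t : ℕ) :
    (t + 1) * weightedChooseSum (M + 1) (t + 2) + 2 * (M + 1) * weightedChooseSum M t =
      (M + t + 3) * weightedChooseSum (M + 1) (t + 1) := by
  induction t with
  | zero => simp [weightedChooseSum, sum_range_succ]; ring
  | succ t ih =>
    linear_combination (norm := ring_nf) ih + (t + 2) * weightedChooseSum_succ (M + 1) (t + 2) +
      2 * (M + 1) * weightedChooseSum_succ M t -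
      (M + t + 3) * weightedChooseSum_succ (M + 1) (t + 1) + partialChooseSum_three_term M (t + 1)

theorem d_eq_weightedChooseSum {n k : ℕ} (h : 2 * k ≤ n) :
    d n k = weightedChooseSum (n - k + 1) (n - 2 * k + 1) := by
  rw [d, weightedChooseSum, ← Ico_add_one_right_eq_Icc, sum_Ico_eq_sum_range,
    show n + 1 - 2 * k = n - 2 * k + 1 by omega]
  refine sum_congr rfl fun j hj => ?_
  have hj := mem_range.1 hj
  rw [Nat.add_sub_cancel_left]
  congr 1
  omega

theorem stmt7_general (n k : ℕ) (hk : 1 ≤ k) (h : 2 * k + 1 ≤ n) :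
    ((n : ℤ) - 2 * k + 1) * (d (n - 1) (k - 1) : ℤ) =
      -2 * ((n : ℤ) - k + 1) * (d (n - 1) k : ℤ) +
        (2 * (n : ℤ) - 3 * k + 3) * (d n k : ℤ) := by
  have h₁ : d (n - 1) (k - 1) = weightedChooseSum (n - k + 1) (n - 2 * k + 2) := by
    rw [d_eq_weightedChooseSum (by omega)]
    congr 1 <;> omega
  have h₂ : d (n - 1) k = weightedChooseSum (n - k) (n - 2 * k) := by
    rw [d_eq_weightedChooseSum (by omega)]
    congr 1 <;> omega
  have key := weightedChooseSum_three_term (n - k) (n - 2 * k)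
  rw [h₁, h₂, d_eq_weightedChooseSum (by omega)]
  zify [(by omega : k ≤ n), (by omega : 2 * k ≤ n)] at key ⊢
  linear_combination key

theorem stmt7 (n k : ℕ) (hn : 1 ≤ n) (hk : 1 ≤ k) (h : 2 * k + 1 ≤ n) :
    ((n : ℤ) - 2 * k + 1) * (d (n - 1) (k - 1) : ℤ) =
      -2 * ((n : ℤ) - k + 1) * (d (n - 1) k : ℤ) +
        (2 * (n : ℤ) - 3 * k + 3) * (d n k : ℤ) :=
  stmt7_general n k hk h
end

section
/- Define d_{n,k} = Σ_{i=2k}^{n} (n-i+1)·C(n-k+1, i-2k). Then for all positive integers n, k with n ≥ 2k+1: 2k(n-k)·d_{n-1,k+1} = (4n² + (4-13k)n + 11k² - 5k)·d_{n-1,k} - (2n² - 7nk + 6k²)·d_{n,k}. -/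
open Finset

def tailSum (a k : ℕ) : ℕ := ∑ j ∈ Icc k a, a.choose j

lemma sum_Icc_add_one_add_one {M : Type*} [AddCommMonoid M] (f : ℕ → M) (k a : ℕ) :
    ∑ j ∈ Icc (k + 1) (a + 1), f j = ∑ i ∈ Icc k a, f (i + 1) := by
  rw [← map_add_right_Icc, sum_map]
  rfl

lemma tailSum_eq_choose_add (a k : ℕ) : tailSum a k = a.choose k + tailSum a (k + 1) := by
  rcases le_or_gt k a with hka | hak
  · rw [tailSum, tailSum, ← sum_Ioc_add_eq_sum_Icc hka, Icc_add_one_left_eq_Ioc, add_comm]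
  · simp [tailSum, Nat.choose_eq_zero_of_lt hak, hak, hak.trans (Nat.lt_succ_self k)]

lemma tailSum_eq_sum_Icc_add_one (a k : ℕ) :
    tailSum a k = ∑ j ∈ Icc k (a + 1), a.choose j := by
  rcases le_or_gt k (a + 1) with hka | hak
  · rw [sum_Icc_succ_top hka, Nat.choose_succ_self, add_zero, tailSum]
  · simp [tailSum, hak, hak.trans' (Nat.lt_succ_self a)]

lemma tailSum_add_one_add_one (a k : ℕ) :
    tailSum (a + 1) (k + 1) = tailSum a k + tailSum a (k + 1) := by
  rw [tailSum, sum_Icc_add_one_add_one, tailSum_eq_sum_Icc_add_one a (k + 1),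
    sum_Icc_add_one_add_one, tailSum, ← sum_add_distrib]
  exact sum_congr rfl fun i _ => Nat.choose_succ_succ' a i

lemma sum_Ioc_mul_choose (a k : ℕ) :
    ∑ j ∈ Ioc k (a + 1), j * (a + 1).choose j = (a + 1) * tailSum a k := by
  rw [← Icc_add_one_left_eq_Ioc, sum_Icc_add_one_add_one, tailSum, mul_sum]
  exact sum_congr rfl fun i _ => by rw [mul_comm, Nat.add_one_mul_choose_eq]

lemma d_add_eq_sum_Ioc (N k : ℕ) :
    (d (N + k) k : ℤ) = ∑ j ∈ Ioc k (N + 1), ((j : ℤ) - k) * (N + 1).choose j := by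
  rw [d, Nat.add_sub_cancel]
  push_cast
  refine sum_nbij' (fun i => N + 2 * k + 1 - i) (fun j => N + 2 * k + 1 - j) ?_ ?_ ?_ ?_
    fun i hi => ?_
  any_goals intro i hi; simp only [mem_Icc, mem_Ioc] at hi ⊢; omega
  rw [mem_Icc] at hi
  rw [Nat.choose_symm_of_eq_add (show N + 1 = (i - 2 * k) + (N + 2 * k + 1 - i) by omega)]
  congr 1
  omega

lemma d_add_eq (N k : ℕ) :
    (d (N + k) k : ℤ) = ((N : ℤ) - 2 * k + 1) * tailSum N k + k * N.choose k := by
  have hweighted :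
      ∑ j ∈ Ioc k (N + 1), ((j : ℤ) * (N + 1).choose j) = (N + 1) * tailSum N k := by
    exact_mod_cast sum_Ioc_mul_choose N k
  have hplain : ∑ j ∈ Ioc k (N + 1), ((N + 1).choose j : ℤ) = tailSum (N + 1) (k + 1) := by
    rw [tailSum, Icc_add_one_left_eq_Ioc]
    push_cast
    rfl
  have hpascal := tailSum_add_one_add_one N k
  have hpeel := tailSum_eq_choose_add N k
  simp only [d_add_eq_sum_Ioc, sub_mul, sum_sub_distrib, ← mul_sum, hweighted, hplain]
  push_cast [hpascal, hpeel]
  ring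

section CastChoose

variable {R : Type*} [CommRing R]

lemma Nat.cast_choose_succ_right_eq (a j : ℕ) :
    (a.choose (j + 1) : R) * (j + 1) = a.choose j * ((a : R) - j) := by
  rcases le_or_gt j a with hja | haj
  · have h := congrArg (Nat.cast : ℕ → R) (Nat.choose_succ_right_eq a j)
    push_cast [Nat.cast_sub hja] at h
    exact h
  · simp [Nat.choose_eq_zero_of_lt haj, Nat.choose_eq_zero_of_lt (haj.trans (Nat.lt_succ_self j))]

lemma Nat.cast_choose_mul_succ_eq (a j : ℕ) :
    (a.choose j : R) * (a + 1) = (a + 1).choose j * ((a : R) + 1 - j) := by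
  rcases le_or_gt j (a + 1) with hja | haj
  · have h := congrArg (Nat.cast : ℕ → R) (Nat.choose_mul_succ_eq a j)
    push_cast [Nat.cast_sub hja] at h
    exact h
  · simp [Nat.choose_eq_zero_of_lt haj, Nat.choose_eq_zero_of_lt (haj.trans' (Nat.lt_succ_self a))]

end CastChoose

theorem stmt8_general (n k : ℕ) (hk : 1 ≤ k) (h : 2 * k + 1 ≤ n) :
    2 * (k : ℤ) * ((n : ℤ) - k) * (d (n - 1) (k + 1) : ℤ) =
      (4 * (n : ℤ) ^ 2 + (4 - 13 * (k : ℤ)) * n + 11 * (k : ℤ) ^ 2 - 5 * k) *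
          (d (n - 1) k : ℤ) -
        (2 * (n : ℤ) ^ 2 - 7 * (n : ℤ) * k + 6 * (k : ℤ) ^ 2) * (d n k : ℤ) := by
  obtain ⟨a, rfl⟩ : ∃ a, n = a + 2 + k := ⟨n - k - 2, by omega⟩
  have hd₁ := d_add_eq a (k + 1)
  have hd₂ := d_add_eq (a + 1) k
  have hd₃ := d_add_eq (a + 2) k
  rw [show a + (k + 1) = a + 2 + k - 1 by omega] at hd₁
  rw [show a + 1 + k = a + 2 + k - 1 by omega] at hd₂
  rw [hd₁, hd₂, hd₃, tailSum_eq_choose_add (a + 2), tailSum_add_one_add_one (a + 1),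
    tailSum_eq_choose_add (a + 1), tailSum_add_one_add_one a, tailSum_eq_choose_add a k]
  have hB : (a.choose (k + 1) : ℤ) * (k + 1) = a.choose k * ((a : ℤ) - k) :=
    Nat.cast_choose_succ_right_eq a k
  have hE : (a.choose k : ℤ) * (a + 1) = (a + 1).choose k * ((a : ℤ) + 1 - k) :=
    Nat.cast_choose_mul_succ_eq a k
  have hF : ((a + 1).choose k : ℤ) * (a + 2) = (a + 2).choose k * ((a : ℤ) + 2 - k) := by
    exact_mod_cast Nat.cast_choose_mul_succ_eq (a + 1) k
  push_cast
  linear_combination (2 * (k : ℤ) * (a + 2)) * hB + (k * (a + 2 : ℤ)) * hE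
    - ((2 * a + 4 - k) * (a + 3 - k : ℤ)) * hF

theorem stmt8 (n k : ℕ) (hn : 1 ≤ n) (hk : 1 ≤ k) (h : 2 * k + 1 ≤ n) :
    2 * (k : ℤ) * ((n : ℤ) - k) * (d (n - 1) (k + 1) : ℤ) =
      (4 * (n : ℤ) ^ 2 + (4 - 13 * (k : ℤ)) * n + 11 * (k : ℤ) ^ 2 - 5 * k) *
          (d (n - 1) k : ℤ) -
        (2 * (n : ℤ) ^ 2 - 7 * (n : ℤ) * k + 6 * (k : ℤ) ^ 2) * (d n k : ℤ) :=
  stmt8_general n k hk h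
end

section
/- Define d_{n,k} = Σ_{i=2k}^{n} (n-i+1)·C(n-k+1, i-2k). Then for every positive integer k, d_{2k+1,k}/d_{2k,k} ≥ X(2k+1,k), where X(n,k) = (1/2)·(3 + (k-1)/(2n-3k+3) + (k+3)/(n-2k) - (k+2)/(2n-3k)) + √(y(n,k)) / (2(2n-3k+3)(2n-3k)(n-2k)), with y(n,k) = (4n²+(4-12k)n+9k²-5k)(4n⁴+(28-36k)n³+(60-149k+117k²)n²+(36-174k+276k²-162k³)n+81k⁴-171k³+135k²-45k). Equivalently, this base-case inequality reduces to (k³+9k²+30k+32)² - (k+2)(k²+7k+8)(k³+9k²+22k+64) = 16k(k+1)(k+2)(k+5) ≥ 0. -/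
open Finset

/-- `y(n,k)`, as a real polynomial expression. -/
noncomputable def y (n k : ℝ) : ℝ :=
  (4 * n ^ 2 + (4 - 12 * k) * n + 9 * k ^ 2 - 5 * k) *
    (4 * n ^ 4 + (28 - 36 * k) * n ^ 3 + (60 - 149 * k + 117 * k ^ 2) * n ^ 2 +
      (36 - 174 * k + 276 * k ^ 2 - 162 * k ^ 3) * n +
      81 * k ^ 4 - 171 * k ^ 3 + 135 * k ^ 2 - 45 * k)

/-- `X(n,k)`, the lower bound for the ratio `d_{n,k}/d_{n-1,k}`. -/
noncomputable def Xr (n k : ℝ) : ℝ :=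
  (1 / 2) * (3 + (k - 1) / (2 * n - 3 * k + 3) + (k + 3) / (n - 2 * k) -
    (k + 2) / (2 * n - 3 * k)) +
  Real.sqrt (y n k) / (2 * (2 * n - 3 * k + 3) * (2 * n - 3 * k) * (n - 2 * k))

/-!
At `n = 2k + 1` both `d`'s are tiny: `d_{2k,k} = 1` and `d_{2k+1,k} = k + 4`. On the other side,
`y(2k+1,k) = ((k+2)(k²+7k+16))² - 16k(k+1)(k+2)(k+5)`, so replacing `√y` by `(k+2)(k²+7k+16)`
bounds `X(2k+1,k)` from above by a rational function which simplifies to exactly `k + 4`.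
-/

lemma d_two_mul_self (k : ℕ) : d (2 * k) k = 1 := by
  simp [d]

lemma d_two_mul_add_one_self (k : ℕ) : d (2 * k + 1) k = k + 4 := by
  rw [d, Finset.sum_Icc_succ_top (by omega)]
  simp only [Icc_self, sum_singleton, add_tsub_cancel_left, tsub_self, Nat.choose_zero_right,
    Nat.choose_one_right, mul_one]
  omega

lemma y_two_mul_add_one_self (x : ℝ) :
    y (2 * x + 1) x = ((x + 2) * (x ^ 2 + 7 * x + 16)) ^ 2 - 16 * x * (x + 1) * (x + 2) * (x + 5) := by
  unfold y
  ring

lemma sqrt_y_two_mul_add_one_self_le {x : ℝ} (hx : 0 ≤ x) :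
    √(y (2 * x + 1) x) ≤ (x + 2) * (x ^ 2 + 7 * x + 16) := by
  refine Real.sqrt_le_iff.mpr ⟨by positivity, ?_⟩
  rw [y_two_mul_add_one_self]
  have : 0 ≤ 16 * x * (x + 1) * (x + 2) * (x + 5) := by positivity
  linarith

lemma Xr_two_mul_add_one_self_le {x : ℝ} (hx : 0 ≤ x) : Xr (2 * x + 1) x ≤ x + 4 := by
  have h5 : 0 < x + 5 := by linarith
  have h2 : 0 < x + 2 := by linarith
  calc Xr (2 * x + 1) x
      = (1 / 2) * (3 + (x - 1) / (x + 5) + (x + 3) - 1)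
          + √(y (2 * x + 1) x) / (2 * (x + 5) * (x + 2)) := by
        unfold Xr
        rw [show 2 * (2 * x + 1) - 3 * x = x + 2 by ring, div_self h2.ne']
        ring_nf
    _ ≤ (1 / 2) * (3 + (x - 1) / (x + 5) + (x + 3) - 1)
          + (x + 2) * (x ^ 2 + 7 * x + 16) / (2 * (x + 5) * (x + 2)) := by
        gcongr
        exact sqrt_y_two_mul_add_one_self_le hx
    _ = x + 4 := by
        field_simp
        ring

theorem stmt10_general (k : ℕ) :
    (d (2 * k + 1) k : ℝ) / (d (2 * k) k : ℝ) ≥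
      Xr ((2 * k + 1 : ℕ) : ℝ) ((k : ℕ) : ℝ) := by
  rw [d_two_mul_add_one_self, d_two_mul_self]
  push_cast
  rw [div_one]
  exact Xr_two_mul_add_one_self_le k.cast_nonneg

/-- Base case: `d_{2k+1,k}/d_{2k,k} ≥ X(2k+1,k)` for every positive integer `k`. -/
theorem stmt10 (k : ℕ) (hk : 1 ≤ k) :
    (d (2 * k + 1) k : ℝ) / (d (2 * k) k : ℝ) ≥
      Xr ((2 * k + 1 : ℕ) : ℝ) ((k : ℕ) : ℝ) :=
  stmt10_general k
end

section
/- Define c_{n,k} = (1/(n+1))·C(n+1,k) · Σ_{i=2k}^{n} (n-i+1)·C(n-k+1, i-2k). Then for every positive integer n, the sequence (c_{n,k})_{k=0}^{⌊n/2⌋} is log-concave: c_{n,k}² ≥ c_{n,k+1}·c_{n,k-1} for all 1 ≤ k ≤ ⌊n/2⌋ - 1 (with the convention c_{n,k}=0 for k outside [0,⌊n/2⌋]). -/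
/-!
Write `c n k = (C(n+1,k)/(n+1)) · d n k`. Binomial coefficients are log-concave, so it suffices
that each row `d n ·` is. Since `d n k` is the coefficient of `x^(n-2k)` in
`(1+x)^(n-k+1)/(1-x)^2`, Pascal's rule for `(1+x)^N` gives the Fibonacci-type recurrence
`d (n+2) (k+1) = d (n+1) (k+1) + d n k`. For any triangle `a` obeying this recurrence and supported
on `2k ≤ n`, log-concavity of the rows propagates from rows `n, n+1` to row `n+2`, provided it is
carried along with two inequalities comparing the ratios `a n (k+1) / a n k` of consecutive rows.
The recurrence does not reach column `0`; there the required inequalities follow from the closed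
forms of `d n 0`, `d n 1`, `d n 2`.
-/

open Finset

/-- `c n k = (C(n+1,k)/(n+1)) · d n k` for `0 ≤ k ≤ ⌊n/2⌋`, and `0` otherwise:
the coefficients of the inverse Kazhdan–Lusztig polynomial of the thagomizer
matroid `T_n`. -/
noncomputable def c (n k : ℕ) : ℚ :=
  if k ≤ n / 2 then (Nat.choose (n + 1) k : ℚ) / ((n : ℚ) + 1) * (d n k : ℚ) else 0

open PowerSeries

section Triangle

variable (a : ℕ → ℕ → ℕ)

/-- In terms of the ratios `r n k = a n (k+1) / a n k`: `RowLogConcave` says `r n (k+1) ≤ r n k`,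
`RatioMonoDown` says `r n k ≤ r (n+1) k`, and `RatioAntiDiag` says `r (n+1) (k+1) ≤ r n k`. -/
def RowLogConcave (n : ℕ) : Prop := ∀ k, a n k * a n (k + 2) ≤ a n (k + 1) ^ 2

def RatioMonoDown (n : ℕ) : Prop := ∀ k, a (n + 1) k * a n (k + 1) ≤ a (n + 1) (k + 1) * a n k

def RatioAntiDiag (n : ℕ) : Prop :=
  ∀ k, a (n + 1) (k + 2) * a n k ≤ a (n + 1) (k + 1) * a n (k + 1)

variable {a}

lemma ratioMonoDown_succ (hrec : ∀ n k, a (n + 2) (k + 1) = a (n + 1) (k + 1) + a n k) {m : ℕ}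
    (h0 : a (m + 2) 0 * a (m + 1) 1 ≤ a (m + 2) 1 * a (m + 1) 0) (hU : RatioAntiDiag a m) :
    RatioMonoDown a (m + 1) := by
  rintro (_ | k)
  · exact h0
  · rw [hrec m k, hrec m (k + 1)]
    nlinarith [hU k]

lemma ratioAntiDiag_succ (hrec : ∀ n k, a (n + 2) (k + 1) = a (n + 1) (k + 1) + a n k) {m : ℕ}
    (hL : RowLogConcave a (m + 1)) (hT : RatioMonoDown a m) : RatioAntiDiag a (m + 1) := by
  intro k
  rw [hrec m k, hrec m (k + 1)]
  nlinarith [hL k, hT k]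

lemma ratio_succ_add_two_le (hsupp : ∀ n k, 0 < a n k ↔ 2 * k ≤ n) {m : ℕ}
    (hL : RowLogConcave a m) (hU : RatioAntiDiag a m) (k : ℕ) :
    a (m + 1) (k + 3) * a m k ≤ a (m + 1) (k + 2) * a m (k + 1) := by
  rcases le_or_gt (2 * (k + 2)) m with h | h
  · have h₁ : 0 < a m (k + 1) := (hsupp _ _).2 (by omega)
    have h₂ : 0 < a m (k + 2) := (hsupp _ _).2 h
    refine le_of_mul_le_mul_right ?_ (Nat.mul_pos h₁ h₂)
    calc a (m + 1) (k + 3) * a m k * (a m (k + 1) * a m (k + 2))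
        = a (m + 1) (k + 3) * a m (k + 1) * (a m k * a m (k + 2)) := by ring
      _ ≤ a (m + 1) (k + 2) * a m (k + 2) * a m (k + 1) ^ 2 := Nat.mul_le_mul (hU (k + 1)) (hL k)
      _ = a (m + 1) (k + 2) * a m (k + 1) * (a m (k + 1) * a m (k + 2)) := by ring
  · have : a (m + 1) (k + 3) = 0 := by
      by_contra h'
      have := (hsupp _ _).1 (Nat.pos_of_ne_zero h')
      omega
    simp [this]

lemma rowLogConcave_succ_succ (hrec : ∀ n k, a (n + 2) (k + 1) = a (n + 1) (k + 1) + a n k)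
    {m : ℕ} (h0 : a (m + 2) 0 * a (m + 2) 2 ≤ a (m + 2) 1 ^ 2)
    (hL₁ : RowLogConcave a (m + 1)) (hL : RowLogConcave a m) (hT : RatioMonoDown a m)
    (hV : ∀ k, a (m + 1) (k + 3) * a m k ≤ a (m + 1) (k + 2) * a m (k + 1)) :
    RowLogConcave a (m + 2) := by
  rintro (_ | k)
  · exact h0
  · rw [hrec m k, hrec m (k + 1), hrec m (k + 2)]
    nlinarith [hL₁ (k + 1), hL k, hT (k + 1), hV k]

theorem rowLogConcave_of_rec (hrec : ∀ n k, a (n + 2) (k + 1) = a (n + 1) (k + 1) + a n k)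
    (hsupp : ∀ n k, 0 < a n k ↔ 2 * k ≤ n)
    (hL0 : ∀ n, a n 0 * a n 2 ≤ a n 1 ^ 2)
    (hT0 : ∀ n, a (n + 1) 0 * a n 1 ≤ a (n + 1) 1 * a n 0) (n : ℕ) :
    RowLogConcave a n := by
  have hzero : ∀ n k, n < 2 * k → a n k = 0 := fun n k h =>
    Nat.eq_zero_of_not_pos fun h' => by have := (hsupp n k).1 h'; omega
  let P n := RowLogConcave a n ∧ RatioMonoDown a n ∧ RatioAntiDiag a n
  suffices ∀ n, P n ∧ P (n + 1) from (this n).1.1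
  intro n
  induction n with
  | zero =>
    refine ⟨⟨?_, ?_, ?_⟩, ?_, ?_, ?_⟩ <;> intro k <;> simp (disch := omega) [hzero]
  | succ m ih =>
    obtain ⟨⟨hL, hT, hU⟩, hL₁, hT₁, hU₁⟩ := ih
    have hL₂ := rowLogConcave_succ_succ hrec (hL0 _) hL₁ hL hT
      (ratio_succ_add_two_le hsupp hL hU)
    exact ⟨⟨hL₁, hT₁, hU₁⟩, hL₂, ratioMonoDown_succ hrec (hT0 _) hU₁,
      ratioAntiDiag_succ hrec hL₂ hT₁⟩

end Triangle

lemma Nat.choose_add_two_mul_choose_le_sq (N j : ℕ) :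
    N.choose (j + 2) * N.choose j ≤ N.choose (j + 1) ^ 2 := by
  rcases le_or_gt N (j + 1) with h | h
  · simp [Nat.choose_eq_zero_of_lt (show N < j + 2 by omega)]
  have h₁ : N.choose (j + 2) * (j + 2) = N.choose (j + 1) * (N - (j + 1)) :=
    Nat.choose_succ_right_eq N (j + 1)
  have h₀ := Nat.choose_succ_right_eq N j
  refine Nat.le_of_mul_le_mul_right ?_ (Nat.mul_pos (by omega : 0 < j + 2) (by omega : 0 < N - j))
  calc N.choose (j + 2) * N.choose j * ((j + 2) * (N - j))
      = N.choose (j + 2) * (j + 2) * (N.choose j * (N - j)) := by ring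
    _ = N.choose (j + 1) * (N - (j + 1)) * (N.choose (j + 1) * (j + 1)) := by rw [h₁, h₀]
    _ ≤ N.choose (j + 1) * (N - j) * (N.choose (j + 1) * (j + 2)) := by gcongr <;> omega
    _ = N.choose (j + 1) ^ 2 * ((j + 2) * (N - j)) := by ring

/-- `(1+x)^N / (1-x)^2`, whose coefficient of `x^(n-2k)` for `N = n-k+1` is `d n k`. -/
noncomputable def dSeries (N : ℕ) : ℕ⟦X⟧ := (1 + X) ^ N * PowerSeries.mk fun i => i + 1

lemma coeff_dSeries (N m : ℕ) :
    coeff m (dSeries N) = ∑ j ∈ range (m + 1), N.choose j * (m - j + 1) := by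
  have h : ((1 + X) ^ N : ℕ⟦X⟧) = ((1 + Polynomial.X) ^ N : Polynomial ℕ) := by simp
  rw [dSeries, h, coeff_mul, Nat.sum_antidiagonal_eq_sum_range_succ_mk]
  simp only [Polynomial.coeff_coe, Polynomial.coeff_one_add_X_pow, coeff_mk, Nat.cast_id,
    Nat.succ_eq_add_one]

lemma coeff_zero_dSeries (N : ℕ) : coeff 0 (dSeries N) = 1 := by
  simp [coeff_dSeries]

lemma coeff_succ_dSeries_succ (N m : ℕ) :
    coeff (m + 1) (dSeries (N + 1)) = coeff m (dSeries N) + coeff (m + 1) (dSeries N) := by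
  rw [← coeff_succ_X_mul m, ← map_add, dSeries, dSeries, pow_succ]
  ring_nf

lemma d_eq_coeff_dSeries (k m : ℕ) : d (2 * k + m) k = coeff m (dSeries (k + m + 1)) := by
  rw [coeff_dSeries, d, ← Ico_add_one_right_eq_Icc, sum_Ico_eq_sum_range,
    show 2 * k + m + 1 - 2 * k = m + 1 by omega, show 2 * k + m - k + 1 = k + m + 1 by omega]
  refine sum_congr rfl fun j _ => ?_
  rw [Nat.add_sub_cancel_left, mul_comm, Nat.add_sub_add_left]

lemma d_eq_zero {n k : ℕ} (h : n < 2 * k) : d n k = 0 := by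
  rw [d, Icc_eq_empty (by omega), sum_empty]

lemma d_pos_iff (n k : ℕ) : 0 < d n k ↔ 2 * k ≤ n := by
  refine ⟨fun h => ?_, fun h => ?_⟩
  · by_contra! h'
    simp [d_eq_zero h'] at h
  · obtain ⟨m, rfl⟩ := Nat.exists_eq_add_of_le h
    rw [d_eq_coeff_dSeries, coeff_dSeries, sum_range_succ']
    simp

lemma d_add_two_add_one (n k : ℕ) : d (n + 2) (k + 1) = d (n + 1) (k + 1) + d n k := by
  rcases lt_or_ge n (2 * k) with h | h
  · rw [d_eq_zero h, d_eq_zero (by omega), d_eq_zero (by omega)]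
  obtain ⟨m, rfl⟩ := Nat.exists_eq_add_of_le h
  rcases m with _ | m
  · rw [d_eq_zero (show 2 * k + 0 + 1 < 2 * (k + 1) by omega),
      show 2 * k + 0 + 2 = 2 * (k + 1) + 0 by ring, d_eq_coeff_dSeries, d_eq_coeff_dSeries,
      coeff_zero_dSeries, coeff_zero_dSeries]
  · rw [show 2 * k + (m + 1) + 2 = 2 * (k + 1) + (m + 1) by ring,
      show 2 * k + (m + 1) + 1 = 2 * (k + 1) + m by ring, d_eq_coeff_dSeries, d_eq_coeff_dSeries,
      d_eq_coeff_dSeries, show k + 1 + (m + 1) + 1 = (k + 1 + m + 1) + 1 by ring,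
      coeff_succ_dSeries_succ, show k + (m + 1) + 1 = k + 1 + m + 1 by ring]

lemma d_zero (n : ℕ) : d n 0 = (n + 1) * 2 ^ n := by
  have h : d n 0 = coeff n (dSeries (n + 1)) := by simpa using d_eq_coeff_dSeries 0 n
  rw [h, coeff_dSeries, ← Nat.sum_range_choose, mul_sum]
  refine sum_congr rfl fun j hj => ?_
  rw [mem_range] at hj
  rw [show n - j + 1 = n + 1 - j by omega, ← Nat.choose_mul_succ_eq, mul_comm]

lemma d_one (n : ℕ) : d (n + 2) 1 = n * 2 ^ (n + 1) + 1 := by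
  induction n with
  | zero => decide
  | succ n ih =>
    rw [d_add_two_add_one, ih, d_zero]
    ring

lemma d_two (n : ℕ) : d (n + 4) 2 + 2 ^ (n + 2) = n * 2 ^ (n + 2) + n + 5 := by
  induction n with
  | zero => decide
  | succ n ih =>
    rw [d_add_two_add_one (n + 3) 1, d_one (n + 1),
      show d (n + 3 + 1) (1 + 1) = d (n + 4) 2 from rfl]
    ring_nf at ih ⊢
    omega

lemma d_succ_zero_mul_d_one_le (n : ℕ) : d (n + 1) 0 * d n 1 ≤ d (n + 1) 1 * d n 0 := by
  rcases n with _ | _ | n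
  · simp [d_eq_zero]
  · simp [d_eq_zero]
  · rw [d_zero, d_zero, d_one, show n + 1 + 2 = n + 3 from rfl, show n + 3 = n + 1 + 2 from rfl,
      d_one]
    have h : n + 5 ≤ 12 * 2 ^ n := by have : n < 2 ^ n := Nat.lt_two_pow_self; omega
    simp only [pow_add] at h ⊢
    generalize 2 ^ n = P at h ⊢
    nlinarith [Nat.mul_le_mul_left P h]

lemma sq_add_five_le (n : ℕ) : (n + 5) ^ 2 ≤ 36 * 2 ^ n := by
  induction n with
  | zero => norm_num
  | succ n ih =>
    rw [pow_succ (2 : ℕ) n]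
    nlinarith [Nat.zero_le (n * n)]

lemma d_zero_mul_d_two_le (n : ℕ) : d n 0 * d n 2 ≤ d n 1 ^ 2 := by
  rcases lt_or_ge n 4 with h | h
  · simp [d_eq_zero (show n < 2 * 2 by omega)]
  obtain ⟨n, rfl⟩ := Nat.exists_eq_add_of_le' h
  have h2 := d_two n
  have h := sq_add_five_le n
  rw [d_zero, show n + 4 = n + 2 + 2 from rfl, d_one]
  simp only [pow_add] at h h2 ⊢
  generalize 2 ^ n = P at h h2 ⊢
  zify at h h2 ⊢
  rw [← eq_sub_iff_add_eq] at h2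
  rw [h2]
  nlinarith [mul_le_mul_of_nonneg_left h (show (0 : ℤ) ≤ 16 * P by positivity)]

theorem stmt15_general (n : ℕ) (k : ℕ) (hk : 1 ≤ k) (hk' : k + 1 ≤ n / 2) :
    c n (k + 1) * c n (k - 1) ≤ c n k ^ 2 := by
  obtain ⟨j, rfl⟩ : ∃ j, k = j + 1 := ⟨k - 1, by omega⟩
  have hd : d n j * d n (j + 2) ≤ d n (j + 1) ^ 2 :=
    rowLogConcave_of_rec d_add_two_add_one d_pos_iff d_zero_mul_d_two_le
      d_succ_zero_mul_d_one_le n j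
  have hb := Nat.choose_add_two_mul_choose_le_sq (n + 1) j
  have key : (n + 1).choose (j + 2) * d n (j + 2) * ((n + 1).choose j * d n j)
      ≤ ((n + 1).choose (j + 1) * d n (j + 1)) ^ 2 := by
    calc _ = (n + 1).choose (j + 2) * (n + 1).choose j * (d n j * d n (j + 2)) := by ring
      _ ≤ (n + 1).choose (j + 1) ^ 2 * d n (j + 1) ^ 2 := Nat.mul_le_mul hb hd
      _ = _ := by ring
  simp only [c, Nat.add_sub_cancel, if_pos hk', if_pos (show j + 1 ≤ n / 2 by omega),
    if_pos (show j ≤ n / 2 by omega)]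
  have hcast : ∀ i, ((n + 1).choose i : ℚ) / ((n : ℚ) + 1) * (d n i : ℚ)
      = (((n + 1).choose i * d n i : ℕ) : ℚ) / ((n : ℚ) + 1) := fun i => by push_cast; ring
  rw [hcast, hcast, hcast, div_mul_div_comm, div_pow, ← sq]
  gcongr
  exact_mod_cast key

/-- The sequence `(c n k)_k` is log-concave. -/
theorem stmt15 (n : ℕ) (hn : 1 ≤ n) (k : ℕ) (hk : 1 ≤ k) (hk' : k + 1 ≤ n / 2) :
    c n (k + 1) * c n (k - 1) ≤ c n k ^ 2 :=
  stmt15_general n k hk hk'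
end

section
/- For all integers n ≥ 1: 3n·(2^n(n-5)+4(n+1))² - 4(n-1)·(2^{n-1}(n-2)+n)·(2^n(n-8)+4(n-1)n+16) ≥ 0. -/
lemma pow_ge (n : ℕ) (h : 10 ≤ n) : 4 * n ^ 2 ≤ 2 ^ (n - 1) := by
  induction n with
  | zero => omega
  | succ m ih =>
    rcases Nat.lt_or_ge m 10 with hm | hm
    · have hm9 : m = 9 := by omega
      subst hm9; norm_num
    · have h1 := ih (by omega)
      have he : (2:ℕ) ^ (m + 1 - 1) = 2 * 2 ^ (m - 1) := by
        have : m + 1 - 1 = (m - 1) + 1 := by omega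
        rw [this, pow_succ]; ring
      rw [he]
      nlinarith [h1]

theorem stmt17 (n : ℕ) (hn : 1 ≤ n) :
    0 ≤ 3 * (n : ℤ) * (2 ^ n * ((n : ℤ) - 5) + 4 * ((n : ℤ) + 1)) ^ 2 -
      4 * ((n : ℤ) - 1) * (2 ^ (n - 1) * ((n : ℤ) - 2) + (n : ℤ)) *
        (2 ^ n * ((n : ℤ) - 8) + 4 * ((n : ℤ) - 1) * (n : ℤ) + 16) := by
  rcases Nat.lt_or_ge n 10 with h | h
  · interval_cases n <;> norm_num
  · have h2 : n = (n - 1) + 1 := by omega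
    have key : (4 * (n : ℤ) ^ 2) ≤ 2 ^ (n - 1) := by
      have := pow_ge n h
      exact_mod_cast this
    have hx : (0:ℤ) < 2 ^ (n - 1) := by positivity
    set x : ℤ := 2 ^ (n - 1) with hxdef
    have h2n : (2:ℤ) ^ n = 2 * x := by
      rw [h2, pow_succ]; ring
    rw [h2n]
    have hn' : (10 : ℤ) ≤ (n : ℤ) := by exact_mod_cast h
    nlinarith [key, hn', sq_nonneg ((n:ℤ) - 10), sq_nonneg x, mul_pos hx hx,
      mul_le_mul_of_nonneg_left key (by positivity : (0:ℤ) ≤ x),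
      sq_nonneg ((n:ℤ)*x), sq_nonneg (x - 4*(n:ℤ)^2)]
end
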